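/- arXiv:2305.12253 — 9 statements merged into one kernel-verified Lean document; each statement's English description precedes it below -/
import Mathlib

section
/- Let $\Phi : (0,1] \to [1,\infty)$ be a non-increasing function and $0 < p \le 1$ such that for all $t_1, t_2 \in (0,1]$, $\Phi(t_1 t_2)^p \le \Phi(t_1)^p + \Phi(t_2)^p$. Then for every $0 < s < 1$ and every $0 < t < 1$, $\Phi(t) \le \lceil \log_s t \rceil^{1/p} \, \Phi(s)$. -/
theorem stmt3 (Φ : ℝ → ℝ) (p : ℝ) (hp : 0 < p) (hp1 : p ≤ 1)
    (hmono : AntitoneOn Φ (Set.Ioc 0 1))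
    (hge : ∀ t ∈ Set.Ioc (0:ℝ) 1, 1 ≤ Φ t)
    (hsub : ∀ t₁ ∈ Set.Ioc (0:ℝ) 1, ∀ t₂ ∈ Set.Ioc (0:ℝ) 1,
      Φ (t₁ * t₂) ^ p ≤ Φ t₁ ^ p + Φ t₂ ^ p)
    (s t : ℝ) (hs : 0 < s) (hs1 : s < 1) (ht : 0 < t) (ht1 : t < 1) :
    Φ t ≤ ((⌈Real.logb s t⌉ : ℝ)) ^ (1/p) * Φ s := by
  have hsmem : s ∈ Set.Ioc (0:ℝ) 1 := ⟨hs, le_of_lt hs1⟩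
  have htmem : t ∈ Set.Ioc (0:ℝ) 1 := ⟨ht, le_of_lt ht1⟩
  have hlogs : Real.log s < 0 := Real.log_neg hs hs1
  have hlogt : Real.log t < 0 := Real.log_neg ht ht1
  have hlb : 0 < Real.logb s t := by
    rw [Real.logb]; exact div_pos_of_neg_of_neg hlogt hlogs
  have hn1 : (1:ℤ) ≤ ⌈Real.logb s t⌉ := Int.ceil_pos.mpr hlb
  set n : ℤ := ⌈Real.logb s t⌉ with hn
  set k : ℕ := n.toNat with hk
  have hk1 : 1 ≤ k := by omega
  have hkn : (k : ℝ) = (n : ℝ) := by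
    rw [hk]; exact_mod_cast Int.toNat_of_nonneg (show (0:ℤ) ≤ n by omega)
  -- key induction: Φ (s^m)^p ≤ m * Φ s ^ p for m ≥ 1
  have hspow : ∀ m : ℕ, s ^ (m+1) ∈ Set.Ioc (0:ℝ) 1 := fun m =>
    ⟨pow_pos hs _, pow_le_one₀ (le_of_lt hs) (le_of_lt hs1)⟩
  have hind : ∀ m : ℕ, Φ (s ^ (m+1)) ^ p ≤ (m+1 : ℝ) * Φ s ^ p := by
    intro m
    induction m with
    | zero => simp
    | succ m ih =>
      have h1 : Φ (s ^ (m+1) * s) ^ p ≤ Φ (s ^ (m+1)) ^ p + Φ s ^ p :=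
        hsub _ (hspow m) _ hsmem
      have : s ^ (m+2) = s ^ (m+1) * s := by ring
      rw [this]
      calc Φ (s ^ (m+1) * s) ^ p ≤ Φ (s ^ (m+1)) ^ p + Φ s ^ p := h1
        _ ≤ (m+1 : ℝ) * Φ s ^ p + Φ s ^ p := by linarith
        _ = (↑(m+1) + 1 : ℝ) * Φ s ^ p := by push_cast; ring
  -- s ^ k ≤ t
  have hskt : s ^ k ≤ t := by
    have h1 : Real.logb s t ≤ (n : ℝ) := Int.le_ceil _
    have h2 : (n : ℝ) * Real.log s ≤ Real.log t := by
      rw [Real.logb] at h1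
      exact (div_le_iff_of_neg hlogs).mp h1
    have h3 : Real.log (s ^ k) ≤ Real.log t := by
      rw [Real.log_pow, hkn]; exact h2
    exact (Real.log_le_log_iff (pow_pos hs k) ht).mp h3
  have hskmem : s ^ k ∈ Set.Ioc (0:ℝ) 1 :=
    ⟨pow_pos hs _, pow_le_one₀ (le_of_lt hs) (le_of_lt hs1)⟩
  have hΦt : Φ t ≤ Φ (s ^ k) := hmono hskmem htmem hskt
  have hΦt0 : (0:ℝ) ≤ Φ t := le_trans zero_le_one (hge t htmem)
  have hΦs0 : (0:ℝ) ≤ Φ s := le_trans zero_le_one (hge s hsmem)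
  have hkey : Φ t ^ p ≤ (k : ℝ) * Φ s ^ p := by
    calc Φ t ^ p ≤ Φ (s ^ k) ^ p :=
          Real.rpow_le_rpow hΦt0 hΦt (le_of_lt hp)
      _ ≤ (k : ℝ) * Φ s ^ p := by
          obtain ⟨m, hm⟩ : ∃ m, k = m + 1 := ⟨k - 1, by omega⟩
          rw [hm]; exact_mod_cast hind m
  -- take (1/p)-th power
  have hppos : 0 < 1/p := by positivity
  have hfin : (Φ t ^ p) ^ (1/p) ≤ ((k : ℝ) * Φ s ^ p) ^ (1/p) :=
    Real.rpow_le_rpow (Real.rpow_nonneg hΦt0 p) hkey (le_of_lt hppos)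
  have hl : (Φ t ^ p) ^ (1/p) = Φ t := by
    rw [← Real.rpow_mul hΦt0, mul_one_div_cancel hp.ne', Real.rpow_one]
  have hr : ((k : ℝ) * Φ s ^ p) ^ (1/p) = (k : ℝ) ^ (1/p) * Φ s := by
    rw [Real.mul_rpow (Nat.cast_nonneg k) (Real.rpow_nonneg hΦs0 p),
      ← Real.rpow_mul hΦs0, mul_one_div_cancel hp.ne', Real.rpow_one]
  rw [hl, hr, hkn] at hfin
  exact hfin
end

section
/- Let $\Phi : (0,1] \to [1,\infty)$ be non-increasing with $\Phi(s^n) \le n^{1/p}\Phi(s)$ for all $n \in \mathbb{N}$ and all $0 < s < 1$, where $0 < p \le 1$. Then for all $0 < a \le t < 1$, $\Phi(a) \le 2^{1/p} \Phi(t) \left( \frac{-\log a}{-\log t} \right)^{1/p}$. -/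
theorem stmt4 (Φ : ℝ → ℝ) (p : ℝ) (hp : 0 < p) (hp1 : p ≤ 1)
    (hmono : AntitoneOn Φ (Set.Ioc 0 1))
    (hge : ∀ t ∈ Set.Ioc (0:ℝ) 1, 1 ≤ Φ t)
    (h : ∀ n : ℕ, 1 ≤ n → ∀ s : ℝ, 0 < s → s < 1 →
      Φ (s ^ n) ≤ (n : ℝ) ^ (1/p) * Φ s)
    (a t : ℝ) (ha : 0 < a) (hat : a ≤ t) (ht1 : t < 1) :
    Φ a ≤ 2 ^ (1/p) * Φ t * ((-Real.log a) / (-Real.log t)) ^ (1/p) := by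
  have ht0 : 0 < t := lt_of_lt_of_le ha hat
  have ha1 : a < 1 := lt_of_le_of_lt hat ht1
  have hlt : Real.log t < 0 := Real.log_neg ht0 ht1
  have hla : Real.log a ≤ Real.log t := Real.log_le_log ha hat
  set r := Real.log a / Real.log t with hr
  have hr1 : 1 ≤ r := by
    rw [hr, le_div_iff_of_neg hlt]; simpa using hla
  have hr0 : 0 ≤ r := by linarith
  set n := ⌈r⌉₊ with hn
  have hn1 : 1 ≤ n := Nat.one_le_ceil_iff.2 (by linarith)
  have hnr : r ≤ (n : ℝ) := Nat.le_ceil r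
  have hn2 : (n : ℝ) ≤ 2 * r := by
    have := (Nat.ceil_lt_add_one hr0).le
    linarith
  have hrl : r * Real.log t = Real.log a := div_mul_cancel₀ _ (ne_of_lt hlt)
  have htn : t ^ n ≤ a := by
    have hlog : Real.log (t ^ n) ≤ Real.log a := by
      rw [Real.log_pow]
      calc (n : ℝ) * Real.log t ≤ r * Real.log t :=
            mul_le_mul_of_nonpos_right hnr (le_of_lt hlt)
        _ = Real.log a := hrl
    exact (Real.log_le_log_iff (pow_pos ht0 n) ha).1 hlog
  have h1 : Φ a ≤ Φ (t ^ n) :=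
    hmono ⟨pow_pos ht0 n, pow_le_one₀ ht0.le ht1.le⟩ ⟨ha, ha1.le⟩ htn
  have h2 : Φ (t ^ n) ≤ (n : ℝ) ^ (1/p) * Φ t := h n hn1 t ht0 ht1
  have hΦt : 1 ≤ Φ t := hge t ⟨ht0, ht1.le⟩
  have h3 : (n : ℝ) ^ (1/p) ≤ 2 ^ (1/p) * r ^ (1/p) := by
    have := Real.rpow_le_rpow (by positivity) hn2 (by positivity : (0:ℝ) ≤ 1/p)
    rwa [Real.mul_rpow (by norm_num) hr0] at this
  have hreq : (-Real.log a) / (-Real.log t) = r := neg_div_neg_eq _ _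
  rw [hreq]
  calc Φ a ≤ (n : ℝ) ^ (1/p) * Φ t := h1.trans h2
    _ ≤ (2 ^ (1/p) * r ^ (1/p)) * Φ t :=
        mul_le_mul_of_nonneg_right h3 (by linarith)
    _ = 2 ^ (1/p) * Φ t * r ^ (1/p) := by ring
end

section
/- Let $\mathcal{X}=(\boldsymbol{x}_n)_{n=1}^\infty$ be a basis of a $p$-Banach space $\mathbb{X}$, $0<p\le 1$, with biorthogonal functionals $(\boldsymbol{x}_n^*)$. Suppose $\mathcal{X}$ is truncation quasi-greedy with constant $C$, i.e., $\min_{n\in A}|\boldsymbol{x}_n^*(f)| \, \|\sum_{n\in A}\operatorname{sgn}(\boldsymbol{x}_n^*(f))\boldsymbol{x}_n\| \le C\|f\|$ for all $f$ and all greedy sets $A$ of $f$. Then for every finite set $A \subset \mathbb{N}$, every choice of unimodular signs $\varepsilon \in \mathbb{E}^A$, and every $f \in \mathbb{X}$ with $\|f\|_\infty \le 1$ and $A \cap \operatorname{supp}(f) = \emptyset$, we have $\|\mathbb{1}_{\varepsilon,A}\| \le 2^{1/p} C \, \|\mathbb{1}_{\varepsilon,A} + f\|$. -/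
/-- The sign of a complex scalar, with the convention `sgn 0 = 1`. -/
noncomputable def csgn (z : ℂ) : ℂ := if z = 0 then 1 else z / ((‖z‖ : ℝ) : ℂ)

/-!
Since `‖f‖∞ ≤ 1` and `f` vanishes on `A`, the coefficients of `g = 𝟙_{ε,A} + f` are unimodular on
`A` and of modulus at most `1` off `A`, so `A` itself is a greedy set of `g` (greedy sets allow
ties). On it the truncation quasi-greedy inequality reads `‖𝟙_{ε,A}‖ ≤ C ‖g‖`, and `2^{1/p} ≥ 1`.
The only subtlety is the sign of `C`: if `C < 0`, the inequality applied to the greedy set `{0}`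
of `u + 2 e₀` forces `N (u + 2 e₀) = 0` for every `u` with coefficients bounded by `1`, and the
`p`-triangle inequality then gives `N g = 0`.
-/

open Finset

lemma csgn_of_norm_eq_one {z : ℂ} (hz : ‖z‖ = 1) : csgn z = z := by
  have hz0 : z ≠ 0 := by rintro rfl; simp at hz
  simp [csgn, hz0, hz]

lemma eq_zero_of_add_of_eq_zero {X : Type*} [Add X] {N : X → ℝ} {p : ℝ} (hp : 0 < p)
    (hN0 : ∀ f, 0 ≤ N f)
    (hNp : ∀ f g, N (f + g) ^ p ≤ N f ^ p + N g ^ p) {u v : X} (hu : N u = 0) (hv : N v = 0) :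
    N (u + v) = 0 := by
  have h := hNp u v
  rw [hu, hv, Real.zero_rpow hp.ne', add_zero] at h
  exact (Real.rpow_eq_zero (hN0 _) hp.ne').mp (le_antisymm h (Real.rpow_nonneg (hN0 _) p))

section Biorthogonal

variable {X : Type*} [AddCommGroup X] [Module ℂ X] {e : ℕ → X} {φ : ℕ → X →ₗ[ℂ] ℂ}

def IsGreedySet (φ : ℕ → X →ₗ[ℂ] ℂ) (g : X) (A : Finset ℕ) : Prop :=
  ∀ n ∈ A, ∀ k ∉ A, ‖φ k g‖ ≤ ‖φ n g‖

def IsTruncationQuasiGreedy (φ : ℕ → X →ₗ[ℂ] ℂ) (e : ℕ → X) (N : X → ℝ) (C : ℝ) : Prop :=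
  ∀ (g : X) (A : Finset ℕ) (hA : A.Nonempty), IsGreedySet φ g A →
    (A.inf' hA fun n => ‖φ n g‖) * N (∑ n ∈ A, csgn (φ n g) • e n) ≤ C * N g

lemma coeff_sum_smul_add (hbi : ∀ n k, φ n (e k) = if n = k then 1 else 0)
    {A : Finset ℕ} (ε : ℕ → ℂ) {f : X} (hsupp : ∀ n ∈ A, φ n f = 0) (n : ℕ) :
    φ n ((∑ k ∈ A, ε k • e k) + f) = if n ∈ A then ε n else φ n f := by
  split_ifs with hn <;> simp [map_sum, hbi, hn, hsupp]

lemma isGreedySet_singleton_add_two_smul (hbi : ∀ n k, φ n (e k) = if n = k then 1 else 0)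
    {g : X} (hg : ∀ n, ‖φ n g‖ ≤ 1) (m : ℕ) : IsGreedySet φ (g + (2 : ℂ) • e m) {m} := by
  intro n hn k hk
  rw [mem_singleton] at hn hk
  subst hn
  have hgm : 1 ≤ ‖φ n g + 2‖ := by
    have := norm_sub_norm_le (2 : ℂ) (-φ n g)
    rw [norm_neg, sub_neg_eq_add, add_comm] at this
    norm_num at this
    linarith [hg n]
  simpa [hbi, hk] using (hg k).trans hgm

lemma mul_nonneg_of_isGreedySet {N : X → ℝ} (hN0 : ∀ f, 0 ≤ N f) {C : ℝ}
    (hTQG : IsTruncationQuasiGreedy φ e N C)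
    {g : X} {A : Finset ℕ} (hA : A.Nonempty) (hgA : IsGreedySet φ g A) : 0 ≤ C * N g :=
  (mul_nonneg (le_inf' hA _ fun _ _ => norm_nonneg _) (hN0 _)).trans (hTQG g A hA hgA)

lemma mul_nonneg_of_norm_coeff_le_one (hbi : ∀ n k, φ n (e k) = if n = k then 1 else 0)
    {N : X → ℝ} {p : ℝ} (hp : 0 < p) (hN0 : ∀ f, 0 ≤ N f)
    (hNp : ∀ f g, N (f + g) ^ p ≤ N f ^ p + N g ^ p)
    (hNh : ∀ (a : ℂ) (f : X), N (a • f) = ‖a‖ * N f) {C : ℝ}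
    (hTQG : IsTruncationQuasiGreedy φ e N C)
    {g : X} (hg : ∀ n, ‖φ n g‖ ≤ 1) : 0 ≤ C * N g := by
  rcases le_or_gt 0 C with hC | hC
  · exact mul_nonneg hC (hN0 g)
  have hvanish : ∀ u : X, (∀ n, ‖φ n u‖ ≤ 1) → N (u + (2 : ℂ) • e 0) = 0 := fun u hu =>
    le_antisymm (nonpos_of_mul_nonneg_right (mul_nonneg_of_isGreedySet hN0 hTQG
      (singleton_nonempty 0) (isGreedySet_singleton_add_two_smul hbi hu 0)) hC) (hN0 _)
  have he : N ((2 : ℂ) • e 0) = 0 := by simpa using hvanish 0 (by simp)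
  have hg0 : N g = 0 := by
    simpa using eq_zero_of_add_of_eq_zero hp hN0 hNp (hvanish g hg)
      (by rw [← neg_one_smul ℂ, hNh, norm_neg, norm_one, one_mul, he] : N (-((2 : ℂ) • e 0)) = 0)
  rw [hg0, mul_zero]

end Biorthogonal

theorem stmt7_general {X : Type*} [AddCommGroup X] [Module ℂ X] (p : ℝ) (hp : 0 < p)
    (N : X → ℝ) (hN0 : ∀ f, 0 ≤ N f)
    (hNp : ∀ f g, N (f + g) ^ p ≤ N f ^ p + N g ^ p)
    (hNh : ∀ (a : ℂ) (f : X), N (a • f) = ‖a‖ * N f)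
    (e : ℕ → X) (φ : ℕ → X →ₗ[ℂ] ℂ)
    (hbi : ∀ n k, φ n (e k) = if n = k then 1 else 0)
    (C : ℝ)
    (hTQG : ∀ (g : X) (A : Finset ℕ) (hA : A.Nonempty),
      (∀ n ∈ A, ∀ k ∉ A, ‖φ k g‖ ≤ ‖φ n g‖) →
      (A.inf' hA fun n => ‖φ n g‖) * N (∑ n ∈ A, csgn (φ n g) • e n)
        ≤ C * N g)
    (A : Finset ℕ) (ε : ℕ → ℂ) (hε : ∀ n ∈ A, ‖ε n‖ = 1)
    (f : X) (hfinf : ∀ n, ‖φ n f‖ ≤ 1) (hsupp : ∀ n ∈ A, φ n f = 0) :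
    N (∑ n ∈ A, ε n • e n) ≤
      2 ^ (1/p) * C * N ((∑ n ∈ A, ε n • e n) + f) := by
  set g := (∑ n ∈ A, ε n • e n) + f
  have hcoeff := coeff_sum_smul_add hbi ε hsupp
  have hg : ∀ n, ‖φ n g‖ ≤ 1 := fun n => by
    rw [hcoeff]; split_ifs with hn; exacts [(hε n hn).le, hfinf n]
  have hCg := mul_nonneg_of_norm_coeff_le_one hbi hp hN0 hNp hNh hTQG hg
  have hbound : N (∑ n ∈ A, ε n • e n) ≤ C * N g := by
    rcases A.eq_empty_or_nonempty with rfl | hA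
    · have hN00 : N 0 = 0 := by simpa using hNh 0 0
      simpa [hN00] using hCg
    have hgA : IsGreedySet φ g A := fun n hn k hk => by
      rw [hcoeff, hcoeff, if_pos hn, if_neg hk, hε n hn]; exact hfinf k
    have hunit : ∀ n ∈ A, φ n g = ε n := fun n hn => by rw [hcoeff, if_pos hn]
    have hinf : (A.inf' hA fun n => ‖φ n g‖) = 1 :=
      (inf'_congr hA rfl fun n hn => by rw [hunit n hn, hε n hn]).trans (inf'_const hA 1)
    have hsgn : ∑ n ∈ A, csgn (φ n g) • e n = ∑ n ∈ A, ε n • e n :=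
      sum_congr rfl fun n hn => by rw [hunit n hn, csgn_of_norm_eq_one (hε n hn)]
    simpa only [hinf, hsgn, one_mul] using hTQG g A hA hgA
  calc N (∑ n ∈ A, ε n • e n) ≤ C * N g := hbound
    _ ≤ 2 ^ (1/p) * (C * N g) :=
      le_mul_of_one_le_left hCg (Real.one_le_rpow one_le_two (one_div_pos.mpr hp).le)
    _ = 2 ^ (1/p) * C * N g := (mul_assoc _ _ _).symm

theorem stmt7 {X : Type*} [AddCommGroup X] [Module ℂ X] (p : ℝ) (hp : 0 < p) (hp1 : p ≤ 1)
    (N : X → ℝ) (hN0 : ∀ f, 0 ≤ N f)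
    (hNp : ∀ f g, N (f + g) ^ p ≤ N f ^ p + N g ^ p)
    (hNh : ∀ (a : ℂ) (f : X), N (a • f) = ‖a‖ * N f)
    (e : ℕ → X) (φ : ℕ → X →ₗ[ℂ] ℂ)
    (hbi : ∀ n k, φ n (e k) = if n = k then 1 else 0)
    (C : ℝ)
    (hTQG : ∀ (g : X) (A : Finset ℕ) (hA : A.Nonempty),
      (∀ n ∈ A, ∀ k ∉ A, ‖φ k g‖ ≤ ‖φ n g‖) →
      (A.inf' hA fun n => ‖φ n g‖) * N (∑ n ∈ A, csgn (φ n g) • e n)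
        ≤ C * N g)
    (A : Finset ℕ) (ε : ℕ → ℂ) (hε : ∀ n ∈ A, ‖ε n‖ = 1)
    (f : X) (hfinf : ∀ n, ‖φ n f‖ ≤ 1) (hsupp : ∀ n ∈ A, φ n f = 0) :
    N (∑ n ∈ A, ε n • e n) ≤
      2 ^ (1/p) * C * N ((∑ n ∈ A, ε n • e n) + f) :=
  stmt7_general p hp N hN0 hNp hNh e φ hbi C hTQG A ε hε f hfinf hsupp
end

section
/- Let $\mathcal{X}=(\boldsymbol{x}_n)$ be a basis of a $p$-Banach space $\mathbb{X}$ with bounded-oscillation unconditionality function $\Phi$ (so $\|S_A(f)\| \le \Phi(t)\|f\|$ whenever $\operatorname{osc}(f,A) \le 1/t$). Then for all $0 < a \le b \le 1$, $\Phi(ab)^p \le (1-b)^p\Phi(b)^p + \Phi(a)^p\big(1 + (1-b)^p\Phi(b)^p\big)$. -/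
/-!
Let `M` be the largest coefficient of `f` on `A` and `D ⊆ A` the set where the coefficients
are at least `b M`. Shrinking the coefficients of `f` on `D` by the factor `b`, i.e. passing to
`g = f - (1 - b) S_D f`, leaves all coefficients of `g` on `A` in `[a b M, b M]`, so
`‖S_A g‖ ≤ Φ(a) ‖g‖`; meanwhile `f` has oscillation at most `1 / b` on `D`, so
`‖S_D f‖ ≤ Φ(b) ‖f‖`. Since `S_A f = S_A g + (1 - b) S_D f` and `g = f - (1 - b) S_D f`, two uses
of the `p`-triangle inequality give the bound.
-/

open Finset

lemma sup'_le_mul_inf'_of_forall_mem_Icc {ι : Type*} {A : Finset ι} (hA : A.Nonempty)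
    {u : ι → ℝ} {lo hi c : ℝ} (hc : 0 ≤ c) (hu : ∀ n ∈ A, u n ∈ Set.Icc lo hi)
    (h : hi ≤ c * lo) : A.sup' hA u ≤ c * A.inf' hA u :=
  calc A.sup' hA u ≤ hi := sup'_le _ _ fun n hn => (hu n hn).2
    _ ≤ c * lo := h
    _ ≤ c * A.inf' hA u := mul_le_mul_of_nonneg_left (le_inf' _ _ fun n hn => (hu n hn).1) hc

lemma rpow_le_mul_rpow_of_le_mul {x y c p : ℝ} (hx : 0 ≤ x) (hy : 0 ≤ y) (hc : 0 ≤ c)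
    (hp : 0 ≤ p) (h : x ≤ c * y) : x ^ p ≤ c ^ p * y ^ p :=
  (Real.rpow_le_rpow hx h hp).trans_eq (Real.mul_rpow hc hy)

lemma le_rpow_one_div_mul_of_rpow_le {x y C p : ℝ} (hx : 0 ≤ x) (hy : 0 ≤ y) (hC : 0 ≤ C)
    (hp : 0 < p) (h : x ^ p ≤ C * y ^ p) : x ≤ C ^ (1 / p) * y := by
  have h' := rpow_le_mul_rpow_of_le_mul (Real.rpow_nonneg hx p) (Real.rpow_nonneg hy p) hC
    (one_div_nonneg.2 hp.le) h
  rwa [← Real.rpow_mul hx, ← Real.rpow_mul hy, mul_one_div_cancel hp.ne', Real.rpow_one,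
    Real.rpow_one] at h'

section UpperLevelSet

variable {ι : Type*} {A : Finset ι} (hA : A.Nonempty) (u : ι → ℝ) (b : ℝ)

noncomputable def upperLevelSet : Finset ι := A.filter fun n => b * A.sup' hA u ≤ u n

lemma upperLevelSet_subset : upperLevelSet hA u b ⊆ A := filter_subset _ _

variable {u b}

lemma upperLevelSet_nonempty (hu : ∀ n ∈ A, 0 ≤ u n) (hb1 : b ≤ 1) :
    (upperLevelSet hA u b).Nonempty := by
  obtain ⟨n, hn, hmax⟩ := exists_mem_eq_sup' hA u
  refine ⟨n, mem_filter.2 ⟨hn, ?_⟩⟩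
  rw [← hmax]
  exact mul_le_of_le_one_left (hmax ▸ hu n hn) hb1

lemma sup'_upperLevelSet_le (hb : 0 < b) (hD : (upperLevelSet hA u b).Nonempty) :
    (upperLevelSet hA u b).sup' hD u ≤ 1 / b * (upperLevelSet hA u b).inf' hD u := by
  refine sup'_le_mul_inf'_of_forall_mem_Icc hD (lo := b * A.sup' hA u) (hi := A.sup' hA u)
    (by positivity) (fun n hn => ?_) (by field_simp; rfl)
  obtain ⟨hnA, hn⟩ := mem_filter.1 hn
  exact ⟨hn, le_sup' u hnA⟩

lemma sup'_ite_upperLevelSet_le [DecidableEq ι] {a : ℝ} (ha : 0 < a) (hab : a ≤ b)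
    (hu : ∀ n ∈ A, 0 ≤ u n) (hosc : A.sup' hA u ≤ 1 / (a * b) * A.inf' hA u) :
    A.sup' hA (fun n => if n ∈ upperLevelSet hA u b then b * u n else u n)
      ≤ 1 / a * A.inf' hA (fun n => if n ∈ upperLevelSet hA u b then b * u n else u n) := by
  set M := A.sup' hA u
  have hb : 0 < b := ha.trans_le hab
  have hM : 0 ≤ M := (hu _ hA.choose_spec).trans (le_sup' u hA.choose_spec)
  have hlow : a * b * M ≤ A.inf' hA u := by
    rwa [one_div_mul_eq_div, le_div_iff₀ (by positivity), mul_comm] at hosc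
  refine sup'_le_mul_inf'_of_forall_mem_Icc hA (lo := a * (b * M)) (hi := b * M)
    (by positivity) (fun n hn => ?_) (by field_simp; rfl)
  have hnM : u n ≤ M := le_sup' u hn
  have hmn : A.inf' hA u ≤ u n := inf'_le u hn
  by_cases hnD : n ∈ upperLevelSet hA u b
  · have hbM : b * M ≤ u n := (mem_filter.1 hnD).2
    simp only [hnD, if_true]
    constructor <;> nlinarith [mul_nonneg hb.le hM]
  · have hbM : u n < b * M := not_le.1 fun h => hnD (mem_filter.2 ⟨hn, h⟩)
    simp only [hnD, if_false]
    constructor <;> linarith [mul_assoc a b M]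

end UpperLevelSet

section Basis

variable {𝕜 X ι : Type*} [RCLike 𝕜] [AddCommGroup X] [Module 𝕜 X]
  {e : ι → X} {φ : ι → X →ₗ[𝕜] 𝕜}

variable (e φ) in
def partialSum (A : Finset ι) : X →ₗ[𝕜] X where
  toFun f := ∑ n ∈ A, φ n f • e n
  map_add' f g := by simp only [map_add, add_smul, sum_add_distrib]
  map_smul' c f := by simp only [map_smul, smul_eq_mul, mul_smul, smul_sum, RingHom.id_apply]

variable (e φ) in
/-- `‖S_A f‖ ≤ Φ t ‖f‖` whenever `osc (f, A) ≤ 1 / t`, the latter written as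
`max ≤ (1 / t) min` to avoid division. -/
def IsOscUnconditionalityBound (N : X → ℝ) (Φ : ℝ → ℝ) : Prop :=
  ∀ t ∈ Set.Ioc (0 : ℝ) 1, ∀ (f : X) (A : Finset ι) (hA : A.Nonempty),
    (A.sup' hA fun n => ‖φ n f‖) ≤ 1 / t * (A.inf' hA fun n => ‖φ n f‖) →
    N (partialSum e φ A f) ≤ Φ t * N f

lemma IsOscUnconditionalityBound.nonneg {N : X → ℝ} {Φ : ℝ → ℝ}
    (hΦ : IsOscUnconditionalityBound e φ N Φ) (hN0 : ∀ f, 0 ≤ N f) {t : ℝ}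
    (ht : t ∈ Set.Ioc (0 : ℝ) 1) {f : X} (hf : 0 < N f) (i : ι) : 0 ≤ Φ t := by
  have hosc : ({i} : Finset ι).sup' (singleton_nonempty i) (fun n => ‖φ n f‖)
      ≤ 1 / t * ({i} : Finset ι).inf' (singleton_nonempty i) (fun n => ‖φ n f‖) := by
    simp only [sup'_singleton, inf'_singleton]
    exact le_mul_of_one_le_left (norm_nonneg _) (one_le_one_div ht.1 ht.2)
  exact nonneg_of_mul_nonneg_left ((hN0 _).trans (hΦ t ht f {i} _ hosc)) hf

variable [DecidableEq ι]

lemma coeff_partialSum (hbi : ∀ n k, φ n (e k) = if n = k then 1 else 0) (A : Finset ι)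
    (f : X) (n : ι) :
    φ n (partialSum e φ A f) = if n ∈ A then φ n f else 0 := by
  simp only [partialSum, LinearMap.coe_mk, AddHom.coe_mk, map_sum, map_smul, hbi, smul_eq_mul,
    mul_ite, mul_one, mul_zero]
  exact sum_ite_eq A n fun k => φ k f

lemma partialSum_partialSum (hbi : ∀ n k, φ n (e k) = if n = k then 1 else 0)
    {A D : Finset ι} (hDA : D ⊆ A) (f : X) :
    partialSum e φ A (partialSum e φ D f) = partialSum e φ D f := by
  change ∑ n ∈ A, φ n (partialSum e φ D f) • e n = ∑ n ∈ D, φ n f • e n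
  simp only [coeff_partialSum hbi, ite_smul, zero_smul]
  rw [sum_ite_mem, inter_eq_right.2 hDA]

lemma norm_coeff_sub_smul_partialSum (hbi : ∀ n k, φ n (e k) = if n = k then 1 else 0)
    {b : ℝ} (hb : 0 ≤ b) (D : Finset ι) (f : X) (n : ι) :
    ‖φ n (f - ((1 - b : ℝ) : 𝕜) • partialSum e φ D f)‖
      = if n ∈ D then b * ‖φ n f‖ else ‖φ n f‖ := by
  rw [map_sub, map_smul, coeff_partialSum hbi, smul_eq_mul]
  split_ifs
  · rw [show φ n f - ((1 - b : ℝ) : 𝕜) * φ n f = (b : 𝕜) * φ n f by push_cast; ring,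
      norm_mul, RCLike.norm_ofReal, abs_of_nonneg hb]
  · rw [mul_zero, sub_zero]

lemma partialSum_sub_smul_partialSum (hbi : ∀ n k, φ n (e k) = if n = k then 1 else 0)
    {A D : Finset ι} (hDA : D ⊆ A) (c : 𝕜) (f : X) :
    partialSum e φ A (f - c • partialSum e φ D f)
      = partialSum e φ A f - c • partialSum e φ D f := by
  rw [map_sub, map_smul, partialSum_partialSum hbi hDA]

end Basis

section PNorm

variable {𝕜 X : Type*} [RCLike 𝕜] [AddCommGroup X] [Module 𝕜 X] {N : X → ℝ} {p : ℝ}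

lemma apply_sub_rpow_le (hNp : ∀ f g, N (f + g) ^ p ≤ N f ^ p + N g ^ p)
    (hNh : ∀ (c : 𝕜) (f : X), N (c • f) = ‖c‖ * N f) (f w : X) :
    N (f - w) ^ p ≤ N f ^ p + N w ^ p := by
  have h := hNp f ((-1 : 𝕜) • w)
  rwa [hNh, norm_neg, norm_one, one_mul, neg_one_smul, ← sub_eq_add_neg] at h

lemma apply_rpow_le_of_sub_smul_le (hp : 0 < p) (hN0 : ∀ f, 0 ≤ N f)
    (hNp : ∀ f g, N (f + g) ^ p ≤ N f ^ p + N g ^ p)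
    (hNh : ∀ (c : 𝕜) (f : X), N (c • f) = ‖c‖ * N f) {x z f : X} {c α β : ℝ} (hc : 0 ≤ c)
    (hα : 0 ≤ α) (hβ : 0 ≤ β) (hx : N (x - (c : 𝕜) • z) ≤ α * N (f - (c : 𝕜) • z))
    (hz : N z ≤ β * N f) :
    N x ^ p ≤ (c ^ p * β ^ p + α ^ p * (1 + c ^ p * β ^ p)) * N f ^ p := by
  have hcz : N ((c : 𝕜) • z) ^ p ≤ c ^ p * β ^ p * N f ^ p := by
    rw [hNh, RCLike.norm_ofReal, abs_of_nonneg hc, Real.mul_rpow hc (hN0 z), mul_assoc]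
    exact mul_le_mul_of_nonneg_left
      (rpow_le_mul_rpow_of_le_mul (hN0 z) (hN0 f) hβ hp.le hz) (Real.rpow_nonneg hc p)
  have hg : N (f - (c : 𝕜) • z) ^ p ≤ (1 + c ^ p * β ^ p) * N f ^ p := by
    linarith [apply_sub_rpow_le hNp hNh f ((c : 𝕜) • z)]
  have hxz : N (x - (c : 𝕜) • z) ^ p ≤ α ^ p * ((1 + c ^ p * β ^ p) * N f ^ p) :=
    (rpow_le_mul_rpow_of_le_mul (hN0 _) (hN0 _) hα hp.le hx).trans
      (mul_le_mul_of_nonneg_left hg (Real.rpow_nonneg hα p))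
  calc N x ^ p = N ((x - (c : 𝕜) • z) + (c : 𝕜) • z) ^ p := by rw [sub_add_cancel]
    _ ≤ N (x - (c : 𝕜) • z) ^ p + N ((c : 𝕜) • z) ^ p := hNp _ _
    _ ≤ _ := by linarith

end PNorm

theorem stmt11_general {X : Type*} [AddCommGroup X] [Module ℂ X] (p : ℝ) (hp : 0 < p)
    (N : X → ℝ) (hN0 : ∀ f, 0 ≤ N f)
    (hNp : ∀ f g, N (f + g) ^ p ≤ N f ^ p + N g ^ p)
    (hNh : ∀ (a : ℂ) (f : X), N (a • f) = ‖a‖ * N f)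
    (e : ℕ → X) (φ : ℕ → X →ₗ[ℂ] ℂ)
    (hbi : ∀ n k, φ n (e k) = if n = k then 1 else 0)
    (Φ : ℝ → ℝ)
    (hΦ : ∀ t ∈ Set.Ioc (0:ℝ) 1, ∀ (f : X) (A : Finset ℕ) (hA : A.Nonempty),
      (A.sup' hA fun n => ‖φ n f‖)
        ≤ (1/t) * (A.inf' hA fun n => ‖φ n f‖) →
      N (∑ n ∈ A, φ n f • e n) ≤ Φ t * N f)
    (a b : ℝ) (ha : 0 < a) (hab : a ≤ b) (hb1 : b ≤ 1) :
    ∀ (f : X) (A : Finset ℕ) (hA : A.Nonempty),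
      (A.sup' hA fun n => ‖φ n f‖)
        ≤ (1/(a*b)) * (A.inf' hA fun n => ‖φ n f‖) →
      N (∑ n ∈ A, φ n f • e n) ≤
        ((1 - b) ^ p * Φ b ^ p + Φ a ^ p * (1 + (1 - b) ^ p * Φ b ^ p)) ^ (1/p) * N f := by
  intro f A hA hosc
  have hΦ : IsOscUnconditionalityBound e φ N Φ := hΦ
  change N (partialSum e φ A f) ≤ _
  have hb : 0 < b := ha.trans_le hab
  have ha1 : a ≤ 1 := hab.trans hb1
  rcases (hN0 f).eq_or_lt with hf | hf
  · have h := hΦ (a * b) ⟨mul_pos ha hb, mul_le_one₀ ha1 hb.le hb1⟩ f A hA hosc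
    rwa [← hf, mul_zero] at h ⊢
  set D := upperLevelSet hA (fun n => ‖φ n f‖) b
  have hD : D.Nonempty := upperLevelSet_nonempty hA (fun n _ => norm_nonneg _) hb1
  set g := f - ((1 - b : ℝ) : ℂ) • partialSum e φ D f
  have hSg : partialSum e φ A g = partialSum e φ A f - ((1 - b : ℝ) : ℂ) • partialSum e φ D f :=
    partialSum_sub_smul_partialSum hbi (upperLevelSet_subset hA _ b) _ f
  have hcoeff : (fun n => ‖φ n g‖) = fun n => if n ∈ D then b * ‖φ n f‖ else ‖φ n f‖ :=
    funext (norm_coeff_sub_smul_partialSum hbi hb.le D f)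
  have hz := hΦ b ⟨hb, hb1⟩ f D hD (sup'_upperLevelSet_le hA hb hD)
  have hx := hΦ a ⟨ha, ha1⟩ g A hA
    (hcoeff ▸ sup'_ite_upperLevelSet_le hA ha hab (fun n _ => norm_nonneg _) hosc)
  rw [hSg] at hx
  have hΦa := hΦ.nonneg hN0 ⟨ha, ha1⟩ hf 0
  have hΦb := hΦ.nonneg hN0 ⟨hb, hb1⟩ hf 0
  have h1b : 0 ≤ 1 - b := sub_nonneg.2 hb1
  refine le_rpow_one_div_mul_of_rpow_le (hN0 _) (hN0 f) ?_ hp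
    (apply_rpow_le_of_sub_smul_le hp hN0 hNp hNh h1b hΦa hΦb hx hz)
  positivity

theorem stmt11 {X : Type*} [AddCommGroup X] [Module ℂ X] (p : ℝ) (hp : 0 < p) (hp1 : p ≤ 1)
    (N : X → ℝ) (hN0 : ∀ f, 0 ≤ N f)
    (hNp : ∀ f g, N (f + g) ^ p ≤ N f ^ p + N g ^ p)
    (hNh : ∀ (a : ℂ) (f : X), N (a • f) = ‖a‖ * N f)
    (e : ℕ → X) (φ : ℕ → X →ₗ[ℂ] ℂ)
    (hbi : ∀ n k, φ n (e k) = if n = k then 1 else 0)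
    (Φ : ℝ → ℝ)
    (hΦ : ∀ t ∈ Set.Ioc (0:ℝ) 1, ∀ (f : X) (A : Finset ℕ) (hA : A.Nonempty),
      (A.sup' hA fun n => ‖φ n f‖)
        ≤ (1/t) * (A.inf' hA fun n => ‖φ n f‖) →
      N (∑ n ∈ A, φ n f • e n) ≤ Φ t * N f)
    (a b : ℝ) (ha : 0 < a) (hab : a ≤ b) (hb1 : b ≤ 1) :
    ∀ (f : X) (A : Finset ℕ) (hA : A.Nonempty),
      (A.sup' hA fun n => ‖φ n f‖)
        ≤ (1/(a*b)) * (A.inf' hA fun n => ‖φ n f‖) →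
      N (∑ n ∈ A, φ n f • e n) ≤
        ((1 - b) ^ p * Φ b ^ p + Φ a ^ p * (1 + (1 - b) ^ p * Φ b ^ p)) ^ (1/p) * N f :=
  stmt11_general p hp N hN0 hNp hNh e φ hbi Φ hΦ a b ha hab hb1
end

section
/- Let $\Phi : (0,1] \to [1,\infty)$ satisfy $\Phi(ab)^p \le (1-b)^p\Phi(b)^p + \Phi(a)^p(1+(1-b)^p\Phi(b)^p)$ for all $0 < a \le b \le 1$, with $p = 1$. Suppose moreover $\Phi$ is continuous on $(0,1]$ and non-increasing. Then for each $0 < c < 1$, $\Phi$ is Lipschitz on $[c,1]$ with Lipschitz constant at most $\Phi(1)(1+\Phi(c))/c$. -/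
/-- Local-to-global chaining lemma: if a one-sided Lipschitz-type bound holds for
pairs at distance at most `h0`, it holds globally on `[x, y]`. -/
private lemma chain_lemma (Φ : ℝ → ℝ) (x y h0 M : ℝ) (hxy : x ≤ y) (h0pos : 0 < h0)
    (hM : ∀ u v : ℝ, x ≤ u → u ≤ v → v ≤ y → v - u ≤ h0 → Φ u - Φ v ≤ M * (v - u)) :
    Φ x - Φ y ≤ M * (y - x) := by
  obtain ⟨n, hn⟩ := exists_nat_ge ((y - x) / h0)
  set m : ℕ := n + 1 with hm
  have hmpos : (0:ℝ) < (m:ℝ) := by positivity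
  have hstep : y - x ≤ (m:ℝ) * h0 := by
    have h1 : (y - x)/h0 ≤ (m:ℝ) := le_trans hn (by rw [hm]; push_cast; linarith)
    have := (div_le_iff₀ h0pos).mp h1
    linarith
  set d := (y - x) / (m:ℝ) with hd
  have hd0 : 0 ≤ d := div_nonneg (by linarith) hmpos.le
  have hdh : d ≤ h0 := by
    rw [hd, div_le_iff₀ hmpos]; nlinarith
  have hmd : (m:ℝ) * d = y - x := by
    rw [hd]; field_simp
  set t : ℕ → ℝ := fun i => x + (i:ℝ) * d with ht
  have ht0 : t 0 = x := by simp [ht]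
  have htm : t m = y := by simp [ht]; linarith [hmd]
  have key : Φ (t 0) - Φ (t m) = ∑ i ∈ Finset.range m, (Φ (t i) - Φ (t (i+1))) :=
    (Finset.sum_range_sub' (fun i => Φ (t i)) m).symm
  have hterm : ∀ i ∈ Finset.range m, Φ (t i) - Φ (t (i+1)) ≤ M * d := by
    intro i hi
    have hi' : (i:ℝ) + 1 ≤ (m:ℝ) := by
      have := Finset.mem_range.mp hi
      exact_mod_cast this
    have h1 : x ≤ t i := by
      simp [ht]; positivity
    have h2 : t i ≤ t (i+1) := by
      simp [ht]; nlinarith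
    have h3 : t (i+1) ≤ y := by
      simp only [ht]
      push_cast
      nlinarith
    have h4 : t (i+1) - t i = d := by simp [ht]; ring
    have := hM (t i) (t (i+1)) h1 h2 h3 (by rw [h4]; exact hdh)
    rw [h4] at this; exact this
  calc Φ x - Φ y = ∑ i ∈ Finset.range m, (Φ (t i) - Φ (t (i+1))) := by
        rw [← ht0, ← htm]; exact key
    _ ≤ ∑ _i ∈ Finset.range m, M * d := Finset.sum_le_sum hterm
    _ = (m:ℝ) * (M * d) := by rw [Finset.sum_const, Finset.card_range, nsmul_eq_mul]
    _ = M * ((m:ℝ) * d) := by push_cast; ring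
    _ = M * (y - x) := by rw [hmd]

theorem stmt12 (Φ : ℝ → ℝ)
    (hge : ∀ t ∈ Set.Ioc (0:ℝ) 1, 1 ≤ Φ t)
    (hmono : AntitoneOn Φ (Set.Ioc 0 1))
    (hcont : ContinuousOn Φ (Set.Ioc 0 1))
    (hineq : ∀ a b : ℝ, 0 < a → a ≤ b → b ≤ 1 →
      Φ (a * b) ≤ (1 - b) * Φ b + Φ a * (1 + (1 - b) * Φ b))
    (c : ℝ) (hc0 : 0 < c) (hc1 : c < 1) :
    ∀ x ∈ Set.Icc c 1, ∀ y ∈ Set.Icc c 1,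
      |Φ x - Φ y| ≤ (Φ 1 * (1 + Φ c) / c) * |x - y| := by
  have h1mem : (1:ℝ) ∈ Set.Ioc (0:ℝ) 1 := ⟨one_pos, le_refl 1⟩
  have hcmem : c ∈ Set.Ioc (0:ℝ) 1 := ⟨hc0, hc1.le⟩
  have hΦ1 : 1 ≤ Φ 1 := hge 1 h1mem
  have hΦc : 1 ≤ Φ c := hge c hcmem
  set K := Φ 1 * (1 + Φ c) / c with hK
  have hK0 : 0 ≤ K := by
    apply div_nonneg _ hc0.le
    nlinarith
  -- continuity at 1 within Ioc 0 1
  have hcw : ∀ ε > (0:ℝ), ∃ δ > (0:ℝ), ∀ ⦃s : ℝ⦄, s ∈ Set.Ioc (0:ℝ) 1 → dist s 1 < δ →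
      dist (Φ s) (Φ 1) < ε :=
    Metric.continuousWithinAt_iff.mp (hcont 1 h1mem)
  -- Lemma A : ε-approximate bound for y < 1
  have lemA : ∀ ε > (0:ℝ), ∀ x y : ℝ, c ≤ x → x ≤ y → y < 1 →
      Φ x - Φ y ≤ ((Φ 1 + ε) * (1 + Φ c) / c) * (y - x) := by
    intro ε hε x y hcx hxy hy1
    obtain ⟨δ, hδ0, hδ⟩ := hcw ε hε
    have h0pos : 0 < min (c * (1 - y)) (c * (δ/2)) := by
      exact lt_min (mul_pos hc0 (by linarith)) (by positivity)
    apply chain_lemma Φ x y _ _ hxy h0pos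
    intro u v hxu huv hvy hvu
    have hcu : c ≤ u := hcx.trans hxu
    have hcv : c ≤ v := hcu.trans huv
    have hu0 : 0 < u := lt_of_lt_of_le hc0 hcu
    have hv0 : 0 < v := lt_of_lt_of_le hc0 hcv
    have hv1 : v < 1 := lt_of_le_of_lt hvy hy1
    have hvu1 : v - u ≤ c * (1 - y) := hvu.trans (min_le_left _ _)
    have hvu2 : v - u ≤ c * (δ/2) := hvu.trans (min_le_right _ _)
    -- v² ≤ u
    have hvsq : v * v ≤ u := by nlinarith
    have hb1 : u / v ≤ 1 := (div_le_one hv0).mpr huv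
    have hab : v ≤ u / v := (le_div_iff₀ hv0).mpr (by nlinarith)
    have hmul : v * (u / v) = u := by field_simp
    have hi := hineq v (u/v) hv0 hab hb1
    rw [hmul] at hi
    -- Φ(u/v) ≤ Φ 1 + ε
    have huv0 : 0 < u / v := div_pos hu0 hv0
    have hdist : dist (u/v) 1 < δ := by
      rw [Real.dist_eq, abs_of_nonpos (by linarith)]
      have h1 : 1 - u/v = (v - u)/v := by field_simp
      have h2 : (v - u)/v ≤ (v - u)/c := by
        apply div_le_div_of_nonneg_left (by linarith) hc0 hcv
      have h3 : (v - u)/c ≤ δ/2 := by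
        rw [div_le_iff₀ hc0]; linarith
      linarith
    have hΦuv : Φ (u/v) ≤ Φ 1 + ε := by
      have := hδ ⟨huv0, hb1⟩ hdist
      rw [Real.dist_eq] at this
      have := abs_lt.mp this
      linarith
    have hΦv : Φ v ≤ Φ c := hmono hcmem ⟨hv0, hv1.le⟩ hcv
    have hΦuv1 : 1 ≤ Φ (u/v) := hge _ ⟨huv0, hb1⟩
    have hΦvge : 1 ≤ Φ v := hge _ ⟨hv0, hv1.le⟩
    -- from hi : Φ u - Φ v ≤ (1 - u/v) * Φ (u/v) * (1 + Φ v)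
    have hs0 : 0 ≤ 1 - u/v := by linarith
    have hsbound : 1 - u/v ≤ (v - u)/c := by
      have h1 : 1 - u/v = (v - u)/v := by field_simp
      rw [h1]
      apply div_le_div_of_nonneg_left (by linarith) hc0 hcv
    have hmain : Φ u - Φ v ≤ (1 - u/v) * Φ (u/v) * (1 + Φ v) := by nlinarith
    have hprod : (1 - u/v) * Φ (u/v) * (1 + Φ v) ≤ ((v - u)/c) * ((Φ 1 + ε) * (1 + Φ c)) := by
      have hvu0 : (0:ℝ) ≤ (v - u)/c := div_nonneg (by linarith) hc0.le
      have hp1 : (1 - u/v) * Φ (u/v) ≤ ((v - u)/c) * (Φ 1 + ε) :=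
        mul_le_mul hsbound hΦuv (by linarith) hvu0
      have hp2 : ((1 - u/v) * Φ (u/v)) * (1 + Φ v) ≤ (((v - u)/c) * (Φ 1 + ε)) * (1 + Φ c) :=
        mul_le_mul hp1 (by linarith) (by linarith)
          (mul_nonneg hvu0 (by linarith))
      linarith [hp2]
    calc Φ u - Φ v ≤ ((v - u)/c) * ((Φ 1 + ε) * (1 + Φ c)) := le_trans hmain hprod
      _ = ((Φ 1 + ε) * (1 + Φ c) / c) * (v - u) := by ring
  -- Lemma B : exact bound for y < 1
  have lemB : ∀ x y : ℝ, c ≤ x → x ≤ y → y < 1 → Φ x - Φ y ≤ K * (y - x) := by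
    intro x y hcx hxy hy1
    apply le_of_forall_pos_le_add
    intro η hη
    rcases eq_or_lt_of_le hxy with heq | hlt
    · rw [heq]; simp; linarith [mul_nonneg hK0 (sub_nonneg.mpr hxy), hη]
    · set ε := η * c / ((1 + Φ c) * (y - x)) with hε
      have hεpos : 0 < ε := by
        apply div_pos (by positivity)
        apply mul_pos (by linarith) (by linarith)
      have hA := lemA ε hεpos x y hcx hxy hy1
      have h1ne : (1 + Φ c) ≠ 0 := by positivity
      have hyxne : (y - x) ≠ 0 := ne_of_gt (by linarith)
      have hcne : c ≠ 0 := ne_of_gt hc0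
      have h2 : ε * ((1 + Φ c) / c * (y - x)) = η := by
        rw [hε]; field_simp
      have hcalc : ((Φ 1 + ε) * (1 + Φ c) / c) * (y - x)
          = K * (y - x) + ε * ((1 + Φ c) / c * (y - x)) := by
        rw [hK]; ring
      linarith
  -- Lemma C : case y = 1
  have lemC : ∀ x : ℝ, c ≤ x → x ≤ 1 → Φ x - Φ 1 ≤ K * (1 - x) := by
    intro x hcx hx1
    rcases eq_or_lt_of_le hx1 with heq | hlt
    · rw [heq]; simp
    · apply le_of_forall_pos_le_add
      intro η hη
      obtain ⟨δ, hδ0, hδ⟩ := hcw η hη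
      set y' := max x (1 - δ/2) with hy'
      have hxy' : x ≤ y' := le_max_left _ _
      have hcy' : c ≤ y' := hcx.trans hxy'
      have hy'1 : y' < 1 := max_lt hlt (by linarith)
      have hy'ge : 1 - δ/2 ≤ y' := le_max_right _ _
      have hB := lemB x y' hcx hxy' hy'1
      have hy'mem : y' ∈ Set.Ioc (0:ℝ) 1 := ⟨lt_of_lt_of_le hc0 hcy', hy'1.le⟩
      have hdist : dist y' 1 < δ := by
        rw [Real.dist_eq, abs_of_nonpos (by linarith)]
        linarith
      have hΦy' : Φ y' - Φ 1 < η := by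
        have := hδ hy'mem hdist
        rw [Real.dist_eq] at this
        linarith [abs_lt.mp this]
      have hKmono : K * (y' - x) ≤ K * (1 - x) := by
        apply mul_le_mul_of_nonneg_left (by linarith) hK0
      linarith
  -- combine
  have main : ∀ x y : ℝ, c ≤ x → x ≤ y → y ≤ 1 → Φ x - Φ y ≤ K * (y - x) := by
    intro x y hcx hxy hy1
    rcases eq_or_lt_of_le hy1 with heq | hlt
    · rw [heq]; exact lemC x hcx (hxy.trans hy1)
    · exact lemB x y hcx hxy hlt
  -- final
  have final : ∀ x y : ℝ, x ∈ Set.Icc c 1 → y ∈ Set.Icc c 1 → x ≤ y →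
      |Φ x - Φ y| ≤ K * |x - y| := by
    intro x y hx hy hxy
    have hxmem : x ∈ Set.Ioc (0:ℝ) 1 := ⟨lt_of_lt_of_le hc0 hx.1, hx.2⟩
    have hymem : y ∈ Set.Ioc (0:ℝ) 1 := ⟨lt_of_lt_of_le hc0 hy.1, hy.2⟩
    have hΦyx : Φ y ≤ Φ x := hmono hxmem hymem hxy
    rw [abs_of_nonneg (by linarith), abs_sub_comm, abs_of_nonneg (by linarith)]
    exact main x y hx.1 hxy hy.2
  intro x hx y hy
  rcases le_total x y with h | h
  · exact final x y hx hy h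
  · rw [abs_sub_comm (Φ x), abs_sub_comm x]
    exact final y x hy hx h
end

section
/- Let $\mathcal{X}$ be a quasi-greedy basis with constant $C_q$ of a $p$-Banach space $\mathbb{X}$, $0<p\le 1$, and suppose $\mathcal{X}$ is bounded-oscillation unconditional with $\Phi(t) \le C(1-\log t)^{1/p}$ for all $0<t\le 1$. Let $0<t<1$, $f \in \mathbb{X}$, and let $A$ be a $t$-greedy set of $f$ (i.e., $|\boldsymbol{x}_n^*(f)| \ge t|\boldsymbol{x}_k^*(f)|$ for all $n\in A$, $k\notin A$). Then $\|S_A(f)\|^p \le (C_q^p + C^p(1-\log t))\|f\|^p$. -/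
/-!
Split the `t`-greedy set `A` into its part `B` of coefficients strictly larger than every
coefficient outside `A`, and the rest `D = A \ B`. Then `B` is a greedy set, so
`‖S_B f‖ ≤ C_q ‖f‖`, while every coefficient of `D` is dominated by some coefficient outside `A`,
hence by `1/t` times every coefficient in `A`: `D` has oscillation at most `1/t`, and
bounded-oscillation unconditionality bounds `‖S_D f‖`. The `p`-triangle inequality for
`S_A f = S_B f + S_D f` adds the two estimates.
-/

open Finset

lemma rpow_le_mul_rpow_of_le_mul_s14 {a b c p : ℝ} (hp : 0 ≤ p) (ha : 0 ≤ a) (hb : 0 ≤ b)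
    (h : a ≤ c * b) : a ^ p ≤ c ^ p * b ^ p := by
  rcases hb.eq_or_lt with rfl | hb
  · obtain rfl : a = 0 := le_antisymm (by simpa using h) ha
    rcases hp.eq_or_lt with rfl | hp
    · simp
    · simp [Real.zero_rpow hp.ne']
  · have hc : 0 ≤ c := nonneg_of_mul_nonneg_left (ha.trans h) hb
    rw [← Real.mul_rpow hc hb.le]
    exact Real.rpow_le_rpow ha h hp

lemma Finset.sup'_le_one_div_mul_inf' {ι : Type*} {s : Finset ι} (hs : s.Nonempty)
    {a : ι → ℝ} {t : ℝ} (ht : 0 < t) (h : ∀ n ∈ s, ∀ m ∈ s, t * a n ≤ a m) :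
    s.sup' hs a ≤ 1 / t * s.inf' hs a := by
  refine sup'_le hs a fun n hn => ?_
  rw [one_div_mul_eq_div, le_div_iff₀ ht, mul_comm]
  exact le_inf' hs a fun m hm => h n hn m hm

section DominantPart

variable {ι α : Type*} [LinearOrder α] (a : ι → α) (A : Finset ι)

open Classical in
noncomputable def dominantPart : Finset ι :=
  A.filter fun n => ∀ k ∉ A, a k < a n

lemma dominantPart_subset : dominantPart a A ⊆ A := by
  classical exact filter_subset _ _

lemma le_of_mem_dominantPart_of_notMem {n k : ι} (hn : n ∈ dominantPart a A)
    (hk : k ∉ dominantPart a A) : a k ≤ a n := by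
  simp only [dominantPart, mem_filter, not_and, not_forall, not_lt] at hn hk
  by_cases hkA : k ∈ A
  · obtain ⟨k', hk'A, hkk'⟩ := hk hkA
    exact hkk'.trans (hn.2 k' hk'A).le
  · exact (hn.2 k hkA).le

lemma exists_notMem_le_of_mem_sdiff_dominantPart [DecidableEq ι] {n : ι} (hn : n ∈ A \ dominantPart a A) :
    ∃ k ∉ A, a n ≤ a k := by
  simp only [dominantPart, mem_sdiff, mem_filter, not_and, not_forall, not_lt] at hn
  obtain ⟨k, hkA, hnk⟩ := hn.2 hn.1
  exact ⟨k, hkA, hnk⟩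

end DominantPart

lemma mul_le_of_mem_sdiff_dominantPart {ι : Type*} [DecidableEq ι] {a : ι → ℝ} {A : Finset ι} {t : ℝ}
    (ht : 0 ≤ t) (hA : ∀ n ∈ A, ∀ k ∉ A, t * a k ≤ a n) {n m : ι}
    (hn : n ∈ A \ dominantPart a A) (hm : m ∈ A) : t * a n ≤ a m := by
  obtain ⟨k, hkA, hnk⟩ := exists_notMem_le_of_mem_sdiff_dominantPart a A hn
  exact (mul_le_mul_of_nonneg_left hnk ht).trans (hA m hm k hkA)

theorem stmt14_general {X : Type*} [AddCommGroup X] [Module ℂ X] (p : ℝ) (hp : 0 < p)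
    (N : X → ℝ) (hN0 : ∀ f, 0 ≤ N f)
    (hNp : ∀ f g, N (f + g) ^ p ≤ N f ^ p + N g ^ p)
    (hNh : ∀ (a : ℂ) (f : X), N (a • f) = ‖a‖ * N f)
    (e : ℕ → X) (φ : ℕ → X →ₗ[ℂ] ℂ)
    (Cq C : ℝ)
    (hQG : ∀ (g : X) (B : Finset ℕ),
      (∀ n ∈ B, ∀ k ∉ B, ‖(φ k g)‖ ≤ ‖(φ n g)‖) →
      N (∑ n ∈ B, φ n g • e n) ≤ Cq * N g)
    (hBOU : ∀ t : ℝ, 0 < t → t ≤ 1 → ∀ (g : X) (A : Finset ℕ) (hA : A.Nonempty),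
      (A.sup' hA fun n => ‖(φ n g)‖)
        ≤ (1/t) * (A.inf' hA fun n => ‖(φ n g)‖) →
      N (∑ n ∈ A, φ n g • e n) ≤ C * (1 - Real.log t) ^ (1/p) * N g)
    (t : ℝ) (ht0 : 0 < t) (ht1 : t < 1)
    (f : X) (A : Finset ℕ)
    (hA : ∀ n ∈ A, ∀ k ∉ A, t * ‖(φ k f)‖ ≤ ‖(φ n f)‖) :
    N (∑ n ∈ A, φ n f • e n) ^ p ≤ (Cq ^ p + C ^ p * (1 - Real.log t)) * N f ^ p := by
  set B := dominantPart (fun n => ‖φ n f‖) A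
  set L := 1 - Real.log t
  have hL : 0 ≤ L := by linarith [Real.log_nonpos ht0.le ht1.le]
  have hCf : 0 ≤ C * N f := by
    -- bounded-oscillation unconditionality on a singleton, which has oscillation `1`
    have h := hBOU 1 one_pos le_rfl f {0} (singleton_nonempty 0) (by simp)
    simp only [Real.log_one, sub_zero, Real.one_rpow, mul_one] at h
    exact (hN0 _).trans h
  have hSB : N (∑ n ∈ B, φ n f • e n) ≤ Cq * N f :=
    hQG f B fun n hn k hk => le_of_mem_dominantPart_of_notMem _ A hn hk
  have hSD : N (∑ n ∈ A \ B, φ n f • e n) ≤ C * (L ^ (1 / p) * N f) := by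
    rcases (A \ B).eq_empty_or_nonempty with hD | hD
    · have hN_zero : N 0 = 0 := by simpa using hNh 0 0
      rw [hD, sum_empty, hN_zero, mul_left_comm]
      exact mul_nonneg (Real.rpow_nonneg hL _) hCf
    · rw [← mul_assoc]
      exact hBOU t ht0 ht1.le f _ hD <| sup'_le_one_div_mul_inf' hD ht0 fun n hn m hm =>
        mul_le_of_mem_sdiff_dominantPart ht0.le hA hn (mem_sdiff.1 hm).1
  calc N (∑ n ∈ A, φ n f • e n) ^ p
      = N (∑ n ∈ A \ B, φ n f • e n + ∑ n ∈ B, φ n f • e n) ^ p := by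
        rw [sum_sdiff (dominantPart_subset _ A)]
    _ ≤ N (∑ n ∈ A \ B, φ n f • e n) ^ p + N (∑ n ∈ B, φ n f • e n) ^ p := hNp _ _
    _ ≤ C ^ p * (L ^ (1 / p) * N f) ^ p + Cq ^ p * N f ^ p :=
        add_le_add (rpow_le_mul_rpow_of_le_mul_s14 hp.le (hN0 _) (by positivity [hN0 f]) hSD)
          (rpow_le_mul_rpow_of_le_mul_s14 hp.le (hN0 _) (hN0 f) hSB)
    _ = (Cq ^ p + C ^ p * L) * N f ^ p := by
        rw [Real.mul_rpow (Real.rpow_nonneg hL _) (hN0 f), one_div,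
          Real.rpow_inv_rpow hL hp.ne']
        ring

theorem stmt14 {X : Type*} [AddCommGroup X] [Module ℂ X] (p : ℝ) (hp : 0 < p) (hp1 : p ≤ 1)
    (N : X → ℝ) (hN0 : ∀ f, 0 ≤ N f)
    (hNp : ∀ f g, N (f + g) ^ p ≤ N f ^ p + N g ^ p)
    (hNh : ∀ (a : ℂ) (f : X), N (a • f) = ‖a‖ * N f)
    (e : ℕ → X) (φ : ℕ → X →ₗ[ℂ] ℂ)
    (hbi : ∀ n k, φ n (e k) = if n = k then 1 else 0)
    (hvanish : ∀ (g : X) (d : ℝ), 0 < d → {n : ℕ | d ≤ ‖(φ n g)‖}.Finite)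
    (Cq C : ℝ)
    (hQG : ∀ (g : X) (B : Finset ℕ),
      (∀ n ∈ B, ∀ k ∉ B, ‖(φ k g)‖ ≤ ‖(φ n g)‖) →
      N (∑ n ∈ B, φ n g • e n) ≤ Cq * N g)
    (hBOU : ∀ t : ℝ, 0 < t → t ≤ 1 → ∀ (g : X) (A : Finset ℕ) (hA : A.Nonempty),
      (A.sup' hA fun n => ‖(φ n g)‖)
        ≤ (1/t) * (A.inf' hA fun n => ‖(φ n g)‖) →
      N (∑ n ∈ A, φ n g • e n) ≤ C * (1 - Real.log t) ^ (1/p) * N g)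
    (t : ℝ) (ht0 : 0 < t) (ht1 : t < 1)
    (f : X) (A : Finset ℕ)
    (hA : ∀ n ∈ A, ∀ k ∉ A, t * ‖(φ k f)‖ ≤ ‖(φ n f)‖) :
    N (∑ n ∈ A, φ n f • e n) ^ p ≤ (Cq ^ p + C ^ p * (1 - Real.log t)) * N f ^ p :=
  stmt14_general p hp N hN0 hNp hNh e φ Cq C hQG hBOU t ht0 ht1 f A hA
end

section
/- Let $\mathbb{X}$ and $\mathbb{Y}$ be Banach spaces with bases $\mathcal{X}=(\boldsymbol{x}_n)$ and $\mathcal{Y}=(\boldsymbol{y}_n)$ and dual bases $(\boldsymbol{x}_n^*)$, $(\boldsymbol{y}_n^*)$. Equip $\mathbb{X}\oplus\mathbb{Y}$ with the norm $\|(x,y)\| = \max\{\|x\|,\|y\|\}$ and define $\boldsymbol{z}_{2k-1}=(\boldsymbol{x}_k,0)$, $\boldsymbol{z}_{2k}=(-\boldsymbol{x}_k,\boldsymbol{y}_k)$. Then $(\boldsymbol{z}_n)$ is a basis of $\mathbb{X}\oplus\mathbb{Y}$ whose biorthogonal functionals $(\boldsymbol{z}_n^*)$ satisfy $\boldsymbol{x}_n^*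 \circ P_{\mathbb{X}} = \boldsymbol{z}_{2n-1}^* - \boldsymbol{z}_{2n}^*$ and $\boldsymbol{y}_n^* \circ P_{\mathbb{Y}} = \boldsymbol{z}_{2n}^*$ for all $n$, where $P_{\mathbb{X}}, P_{\mathbb{Y}}$ are the coordinate projections. -/
/-- The interleaved sequence `𝒳 ⋉ 𝒴`: `z_{2k} = (x_k, 0)`, `z_{2k+1} = (-x_k, y_k)`
(indexing from `0`). -/
def interleave {X Y : Type*} [AddCommGroup X] [AddCommGroup Y]
    (x : ℕ → X) (y : ℕ → Y) : ℕ → X × Y :=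
  fun n => if n % 2 = 0 then (x (n / 2), 0) else (-x (n / 2), y (n / 2))

theorem stmt16 {X Y : Type*} [NormedAddCommGroup X] [NormedSpace ℂ X]
    [NormedAddCommGroup Y] [NormedSpace ℂ Y]
    (x : ℕ → X) (y : ℕ → Y)
    (hxb : ∃ M, ∀ n, ‖x n‖ ≤ M) (hyb : ∃ M, ∀ n, ‖y n‖ ≤ M)
    (hxd : Dense (Submodule.span ℂ (Set.range x) : Set X))
    (hyd : Dense (Submodule.span ℂ (Set.range y) : Set Y))
    (xs : ℕ → X →L[ℂ] ℂ) (ys : ℕ → Y →L[ℂ] ℂ)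
    (hxbi : ∀ n k, xs n (x k) = if n = k then 1 else 0)
    (hybi : ∀ n k, ys n (y k) = if n = k then 1 else 0)
    (hxsb : ∃ M, ∀ n, ‖xs n‖ ≤ M) (hysb : ∃ M, ∀ n, ‖ys n‖ ≤ M) :
    (∃ M, ∀ n, ‖interleave x y n‖ ≤ M) ∧
    Dense (Submodule.span ℂ (Set.range (interleave x y)) : Set (X × Y)) ∧
    ∃ zs : ℕ → (X × Y) →L[ℂ] ℂ,
      (∃ M, ∀ n, ‖zs n‖ ≤ M) ∧
      (∀ n k, zs n (interleave x y k) = if n = k then 1 else 0) ∧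
      (∀ n : ℕ, (xs n).comp (ContinuousLinearMap.fst ℂ X Y) = zs (2*n) - zs (2*n+1)) ∧
      (∀ n : ℕ, (ys n).comp (ContinuousLinearMap.snd ℂ X Y) = zs (2*n+1)) := by
  obtain ⟨Mx, hMx⟩ := hxb
  obtain ⟨My, hMy⟩ := hyb
  obtain ⟨Mxs, hMxs⟩ := hxsb
  obtain ⟨Mys, hMys⟩ := hysb
  refine ⟨⟨max Mx My, ?_⟩, ?_, ?_⟩
  · intro n
    unfold interleave
    split <;> rw [Prod.norm_def] <;> simp only [norm_neg, norm_zero]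
    · exact max_le_max (hMx _) (le_trans (norm_nonneg _) (hMy 0))
    · exact max_le_max (hMx _) (hMy _)
  · -- density
    have hmem : ∀ k, (x k, (0:Y)) ∈ Submodule.span ℂ (Set.range (interleave x y)) ∧
        ((0:X), y k) ∈ Submodule.span ℂ (Set.range (interleave x y)) := by
      intro k
      have h1 : interleave x y (2*k) = (x k, 0) := by
        unfold interleave; simp [Nat.mul_div_cancel_left]
      have h2 : interleave x y (2*k+1) = (-x k, y k) := by
        unfold interleave
        simp [Nat.mul_add_mod, Nat.mul_add_div]
      have m1 : (x k, (0:Y)) ∈ Submodule.span ℂ (Set.range (interleave x y)) := by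
        exact Submodule.subset_span ⟨2*k, h1⟩
      have m2 : (-x k, y k) ∈ Submodule.span ℂ (Set.range (interleave x y)) := by
        exact Submodule.subset_span ⟨2*k+1, h2⟩
      refine ⟨m1, ?_⟩
      have := Submodule.add_mem _ m1 m2
      simpa using this
    have hle : (Submodule.span ℂ (Set.range x)).prod (Submodule.span ℂ (Set.range y)) ≤
        Submodule.span ℂ (Set.range (interleave x y)) := by
      rintro ⟨a, b⟩ ⟨ha, hb⟩
      have ha' : (a, (0:Y)) ∈ Submodule.span ℂ (Set.range (interleave x y)) := by
        refine Submodule.span_induction (p := fun a _ =>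
          (a, (0:Y)) ∈ Submodule.span ℂ (Set.range (interleave x y))) ?_ ?_ ?_ ?_ ha
        · rintro _ ⟨k, rfl⟩; exact (hmem k).1
        · exact Submodule.zero_mem _
        · intro u v _ _ hu hv; simpa using Submodule.add_mem _ hu hv
        · intro c u _ hu
          have := Submodule.smul_mem _ c hu
          simpa using this
      have hb' : ((0:X), b) ∈ Submodule.span ℂ (Set.range (interleave x y)) := by
        refine Submodule.span_induction (p := fun b _ =>
          ((0:X), b) ∈ Submodule.span ℂ (Set.range (interleave x y))) ?_ ?_ ?_ ?_ hb
        · rintro _ ⟨k, rfl⟩; exact (hmem k).2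
        · exact Submodule.zero_mem _
        · intro u v _ _ hu hv; simpa using Submodule.add_mem _ hu hv
        · intro c u _ hu
          have := Submodule.smul_mem _ c hu
          simpa using this
      have := Submodule.add_mem _ ha' hb'
      simpa using this
    have hdp : Dense ((Submodule.span ℂ (Set.range x)).prod
        (Submodule.span ℂ (Set.range y)) : Set (X × Y)) := by
      have : ((Submodule.span ℂ (Set.range x)).prod (Submodule.span ℂ (Set.range y)) :
          Set (X × Y)) = (Submodule.span ℂ (Set.range x) : Set X) ×ˢ
          (Submodule.span ℂ (Set.range y) : Set Y) := rfl
      rw [this]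
      exact hxd.prod hyd
    exact hdp.mono hle
  · set F : ℕ → (X × Y) →L[ℂ] ℂ := fun n => if n % 2 = 0 then
      (xs (n/2)).comp (ContinuousLinearMap.fst ℂ X Y) +
        (ys (n/2)).comp (ContinuousLinearMap.snd ℂ X Y)
      else (ys (n/2)).comp (ContinuousLinearMap.snd ℂ X Y) with hF
    have hFe : ∀ a, F (2*a) = (xs a).comp (ContinuousLinearMap.fst ℂ X Y) +
        (ys a).comp (ContinuousLinearMap.snd ℂ X Y) := by
      intro a
      simp only [hF, Nat.mul_mod_right, Nat.mul_div_cancel_left _ (by norm_num : 0 < 2)]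
      simp
    have hFo : ∀ a, F (2*a+1) = (ys a).comp (ContinuousLinearMap.snd ℂ X Y) := by
      intro a
      have h1 : (2*a+1) % 2 = 1 := by omega
      have h2 : (2*a+1) / 2 = a := by omega
      simp only [hF, h1, h2]
      norm_num
    refine ⟨F, ⟨Mxs + Mys, ?_⟩, ?_, ?_, ?_⟩
    · intro n
      have hf : ‖(xs (n/2)).comp (ContinuousLinearMap.fst ℂ X Y)‖ ≤ Mxs := by
        refine le_trans ((xs (n/2)).opNorm_comp_le _) ?_
        calc ‖xs (n/2)‖ * ‖ContinuousLinearMap.fst ℂ X Y‖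
            ≤ Mxs * 1 := by
              apply mul_le_mul (hMxs _) (ContinuousLinearMap.norm_fst_le ℂ X Y)
                (norm_nonneg _) (le_trans (norm_nonneg _) (hMxs 0))
          _ = Mxs := mul_one _
      have hs : ‖(ys (n/2)).comp (ContinuousLinearMap.snd ℂ X Y)‖ ≤ Mys := by
        refine le_trans ((ys (n/2)).opNorm_comp_le _) ?_
        calc ‖ys (n/2)‖ * ‖ContinuousLinearMap.snd ℂ X Y‖
            ≤ Mys * 1 := by
              apply mul_le_mul (hMys _) (ContinuousLinearMap.norm_snd_le ℂ X Y)
                (norm_nonneg _) (le_trans (norm_nonneg _) (hMys 0))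
          _ = Mys := mul_one _
      rw [hF]
      dsimp only
      split
      · exact le_trans (norm_add_le _ _) (add_le_add hf hs)
      · exact le_trans hs (le_add_of_nonneg_left (le_trans (norm_nonneg _) hf))
    · intro n k
      have hz1 : ∀ b, interleave x y (2*b) = (x b, 0) := by
        intro b
        unfold interleave
        simp [Nat.mul_div_cancel_left]
      have hz2 : ∀ b, interleave x y (2*b+1) = (-x b, y b) := by
        intro b
        have h1 : (2*b+1) % 2 = 1 := by omega
        have h2 : (2*b+1) / 2 = b := by omega
        unfold interleave
        simp [h1, h2]
      rcases Nat.even_or_odd n with ⟨a, rfl⟩ | ⟨a, rfl⟩ <;>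
        rcases Nat.even_or_odd k with ⟨b, rfl⟩ | ⟨b, rfl⟩ <;>
        simp only [← two_mul, hz1, hz2, hFe, hFo, ContinuousLinearMap.add_apply,
          ContinuousLinearMap.comp_apply, ContinuousLinearMap.coe_fst',
          ContinuousLinearMap.coe_snd', map_zero, map_neg, hxbi, hybi, add_zero]
      · by_cases h : a = b
        · simp [h]
        · rw [if_neg h, if_neg (by omega)]
      · rw [if_neg (show ¬ (2*a = 2*b+1) by omega)]
        by_cases h : a = b <;> simp [h]
      · rw [if_neg (show ¬ (2*a+1 = 2*b) by omega)]
      · by_cases h : a = b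
        · simp [h]
        · rw [if_neg h, if_neg (by omega)]
    · intro n
      rw [hFe, hFo]
      abel
    · intro n
      rw [hFo]
end

section
/- Let $\mathcal{X}=(\boldsymbol{x}_n)$ and $\mathcal{Y}=(\boldsymbol{y}_n)$ be monotone Schauder bases of Banach spaces $\mathbb{X}$ and $\mathbb{Y}$ with basis constants $K_1$ and $K_2$, with $\alpha = \sup_n\|\boldsymbol{x}_n\| < \infty$ and $\beta = \inf_n\|\boldsymbol{y}_n\| > 0$. Then the interleaved sequence $\boldsymbol{z}_{2k-1}=(\boldsymbol{x}_k,0)$, $\boldsymbol{z}_{2k}=(-\boldsymbol{x}_k,\boldsymbol{y}_k)$ is a Schauder basis of $\mathbb{X}\oplus_\infty\mathbb{Y}$ with basis constant at most $\big(1+2\max\{1,\alpha/\beta\}\big)\max\{K_1,K_2\}$. -/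
/-!
The even partial sums of the interleaved system are `(S^x_m a, S^y_m b)` at `(a, b)`, hence
bounded by `max K₁ K₂`. An odd partial sum has first coordinate `S^x_{m+1} a + y*_m(b) • x_m`;
the rank-one term is controlled because `|y*_m(b)| ‖y_m‖ = ‖S^y_{m+1} b - S^y_m b‖ ≤ 2 K₂ ‖b‖`
and `‖y_m‖ ≥ β`, which costs the extra `2 α / β`.
-/

open Finset

lemma norm_coord_mul_norm_le {𝕜 E : Type*} [NormedField 𝕜] [NormedAddCommGroup E]
    [NormedSpace 𝕜 E] {e : ℕ → E →L[𝕜] 𝕜} {b : ℕ → E} {K : ℝ}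
    (hK : ∀ (f : E) (m : ℕ), ‖∑ k ∈ range m, e k f • b k‖ ≤ K * ‖f‖) (f : E) (m : ℕ) :
    ‖e m f‖ * ‖b m‖ ≤ 2 * K * ‖f‖ := by
  rw [← norm_smul, ← add_sub_cancel_left (∑ k ∈ range m, e k f • b k) (e m f • b m),
    ← sum_range_succ]
  calc _ ≤ K * ‖f‖ + K * ‖f‖ := (norm_sub_le _ _).trans (add_le_add (hK f (m + 1)) (hK f m))
    _ = 2 * K * ‖f‖ := by ring

section Interleave

variable {𝕜 X Y : Type*} [NormedField 𝕜]
  [NormedAddCommGroup X] [NormedSpace 𝕜 X] [NormedAddCommGroup Y] [NormedSpace 𝕜 Y]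

@[simp]
lemma interleave_two_mul (x : ℕ → X) (y : ℕ → Y) (k : ℕ) :
    interleave x y (2 * k) = (x k, 0) := by
  simp [interleave]

@[simp]
lemma interleave_two_mul_add_one (x : ℕ → X) (y : ℕ → Y) (k : ℕ) :
    interleave x y (2 * k + 1) = (-x k, y k) := by
  simp [interleave, Nat.add_mod, Nat.add_div]

-- read off from `(a, b) = ∑ₖ (x*ₖ a + y*ₖ b) • (xₖ, 0) + ∑ₖ y*ₖ b • (-xₖ, yₖ)`
noncomputable def interleaveCoord (xs : ℕ → X →L[𝕜] 𝕜) (ys : ℕ → Y →L[𝕜] 𝕜) (n : ℕ) :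
    X × Y →L[𝕜] 𝕜 :=
  if n % 2 = 0 then (xs (n / 2)).coprod (ys (n / 2))
  else (ys (n / 2)).comp (ContinuousLinearMap.snd 𝕜 X Y)

@[simp]
lemma interleaveCoord_two_mul (xs : ℕ → X →L[𝕜] 𝕜) (ys : ℕ → Y →L[𝕜] 𝕜) (k : ℕ) (f : X × Y) :
    interleaveCoord xs ys (2 * k) f = xs k f.1 + ys k f.2 := by
  simp [interleaveCoord]

@[simp]
lemma interleaveCoord_two_mul_add_one (xs : ℕ → X →L[𝕜] 𝕜) (ys : ℕ → Y →L[𝕜] 𝕜) (k : ℕ)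
    (f : X × Y) : interleaveCoord xs ys (2 * k + 1) f = ys k f.2 := by
  simp [interleaveCoord, Nat.add_mod, Nat.add_div]

lemma interleaveCoord_interleave {x : ℕ → X} {y : ℕ → Y}
    {xs : ℕ → X →L[𝕜] 𝕜} {ys : ℕ → Y →L[𝕜] 𝕜}
    (hxbi : ∀ n k, xs n (x k) = if n = k then 1 else 0)
    (hybi : ∀ n k, ys n (y k) = if n = k then 1 else 0) (n k : ℕ) :
    interleaveCoord xs ys n (interleave x y k) = if n = k then 1 else 0 := by
  obtain ⟨a, rfl | rfl⟩ := Nat.even_or_odd' n <;> obtain ⟨b, rfl | rfl⟩ := Nat.even_or_odd' k <;>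
    simp [hxbi, hybi] <;> omega

lemma span_prod_le_span_interleave (x : ℕ → X) (y : ℕ → Y) :
    (Submodule.span 𝕜 (Set.range x)).prod (Submodule.span 𝕜 (Set.range y)) ≤
      Submodule.span 𝕜 (Set.range (interleave x y)) := by
  set Z := Submodule.span 𝕜 (Set.range (interleave x y))
  have hz : ∀ n, interleave x y n ∈ Z := fun n => Submodule.subset_span ⟨n, rfl⟩
  rw [Submodule.prod_le_iff, Submodule.map_span_le, Submodule.map_span_le]
  constructor
  · rintro _ ⟨k, rfl⟩
    simpa using hz (2 * k)
  · rintro _ ⟨k, rfl⟩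
    simpa using Z.add_mem (hz (2 * k)) (hz (2 * k + 1))

lemma dense_span_interleave {x : ℕ → X} {y : ℕ → Y}
    (hxd : Dense (Submodule.span 𝕜 (Set.range x) : Set X))
    (hyd : Dense (Submodule.span 𝕜 (Set.range y) : Set Y)) :
    Dense (Submodule.span 𝕜 (Set.range (interleave x y)) : Set (X × Y)) := by
  refine (hxd.prod hyd).mono ?_
  rw [← Submodule.prod_coe]
  exact span_prod_le_span_interleave x y

lemma sum_range_two_mul_interleave (x : ℕ → X) (y : ℕ → Y)
    (xs : ℕ → X →L[𝕜] 𝕜) (ys : ℕ → Y →L[𝕜] 𝕜) (f : X × Y) (m : ℕ) :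
    ∑ k ∈ range (2 * m), interleaveCoord xs ys k f • interleave x y k =
      (∑ k ∈ range m, xs k f.1 • x k, ∑ k ∈ range m, ys k f.2 • y k) := by
  induction m with
  | zero => simp only [mul_zero, sum_range_zero, Prod.mk_zero_zero]
  | succ m ih =>
    rw [Nat.mul_succ, sum_range_succ, sum_range_succ, ih]
    ext
    · simp only [interleaveCoord_two_mul, interleave_two_mul, add_smul, Prod.smul_mk, smul_zero,
        Prod.mk_add_mk, add_zero, interleaveCoord_two_mul_add_one, interleave_two_mul_add_one,
        smul_neg, sum_range_succ]
      abel
    · simp [sum_range_succ]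

lemma sum_range_two_mul_add_one_interleave (x : ℕ → X) (y : ℕ → Y)
    (xs : ℕ → X →L[𝕜] 𝕜) (ys : ℕ → Y →L[𝕜] 𝕜) (f : X × Y) (m : ℕ) :
    ∑ k ∈ range (2 * m + 1), interleaveCoord xs ys k f • interleave x y k =
      (∑ k ∈ range (m + 1), xs k f.1 • x k + ys m f.2 • x m, ∑ k ∈ range m, ys k f.2 • y k) := by
  rw [sum_range_succ, sum_range_two_mul_interleave]
  ext
  · simp only [interleaveCoord_two_mul, interleave_two_mul, add_smul, Prod.smul_mk, smul_zero,
      Prod.mk_add_mk, add_zero, sum_range_succ]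
    abel
  · simp

variable {x : ℕ → X} {y : ℕ → Y} {xs : ℕ → X →L[𝕜] 𝕜} {ys : ℕ → Y →L[𝕜] 𝕜} {K α β : ℝ}

lemma norm_sum_range_two_mul_interleave_le (hK0 : 0 ≤ K)
    (hKx : ∀ (f : X) (m : ℕ), ‖∑ k ∈ range m, xs k f • x k‖ ≤ K * ‖f‖)
    (hKy : ∀ (f : Y) (m : ℕ), ‖∑ k ∈ range m, ys k f • y k‖ ≤ K * ‖f‖) (f : X × Y) (m : ℕ) :
    ‖∑ k ∈ range (2 * m), interleaveCoord xs ys k f • interleave x y k‖ ≤ K * ‖f‖ := by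
  rw [sum_range_two_mul_interleave, Prod.norm_def]
  exact max_le ((hKx f.1 m).trans (by gcongr; exact norm_fst_le f))
    ((hKy f.2 m).trans (by gcongr; exact norm_snd_le f))

lemma norm_sum_range_two_mul_add_one_interleave_le (hK0 : 0 ≤ K)
    (hKx : ∀ (f : X) (m : ℕ), ‖∑ k ∈ range m, xs k f • x k‖ ≤ K * ‖f‖)
    (hKy : ∀ (f : Y) (m : ℕ), ‖∑ k ∈ range m, ys k f • y k‖ ≤ K * ‖f‖)
    (hα : ∀ n, ‖x n‖ ≤ α) (hβ0 : 0 < β) (hβ : ∀ n, β ≤ ‖y n‖) (f : X × Y) (m : ℕ) :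
    ‖∑ k ∈ range (2 * m + 1), interleaveCoord xs ys k f • interleave x y k‖ ≤
      (1 + 2 * (α / β)) * K * ‖f‖ := by
  have hαβ : 0 ≤ α / β := div_nonneg ((norm_nonneg _).trans (hα 0)) hβ0.le
  have hf₁ : K * ‖f.1‖ ≤ K * ‖f‖ := by gcongr; exact norm_fst_le f
  have hf₂ : K * ‖f.2‖ ≤ K * ‖f‖ := by gcongr; exact norm_snd_le f
  have hcoeff : ‖ys m f.2‖ * ‖x m‖ ≤ 2 * (α / β) * (K * ‖f‖) :=
    calc ‖ys m f.2‖ * ‖x m‖ ≤ ‖ys m f.2‖ * β * (α / β) := by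
          rw [mul_assoc, mul_div_cancel₀ _ hβ0.ne']; gcongr; exact hα m
      _ ≤ ‖ys m f.2‖ * ‖y m‖ * (α / β) := by gcongr; exact hβ m
      _ ≤ 2 * K * ‖f.2‖ * (α / β) :=
          mul_le_mul_of_nonneg_right (norm_coord_mul_norm_le hKy f.2 m) hαβ
      _ ≤ 2 * (α / β) * (K * ‖f‖) := by nlinarith
  have hKf : 0 ≤ K * ‖f‖ := by positivity
  rw [sum_range_two_mul_add_one_interleave, Prod.norm_def]
  refine max_le ?_ ((hKy f.2 m).trans (hf₂.trans (by nlinarith)))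
  calc _ ≤ ‖∑ k ∈ range (m + 1), xs k f.1 • x k‖ + ‖ys m f.2‖ * ‖x m‖ := by
        rw [← norm_smul]; exact norm_add_le _ _
    _ ≤ K * ‖f‖ + 2 * (α / β) * (K * ‖f‖) := add_le_add ((hKx f.1 (m + 1)).trans hf₁) hcoeff
    _ = (1 + 2 * (α / β)) * K * ‖f‖ := by ring

lemma norm_sum_range_interleave_le (hK0 : 0 ≤ K)
    (hKx : ∀ (f : X) (m : ℕ), ‖∑ k ∈ range m, xs k f • x k‖ ≤ K * ‖f‖)
    (hKy : ∀ (f : Y) (m : ℕ), ‖∑ k ∈ range m, ys k f • y k‖ ≤ K * ‖f‖)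
    (hα : ∀ n, ‖x n‖ ≤ α) (hβ0 : 0 < β) (hβ : ∀ n, β ≤ ‖y n‖) (f : X × Y) (m : ℕ) :
    ‖∑ k ∈ range m, interleaveCoord xs ys k f • interleave x y k‖ ≤
      (1 + 2 * (α / β)) * K * ‖f‖ := by
  obtain ⟨q, rfl | rfl⟩ := Nat.even_or_odd' m
  · have hαβ : 0 ≤ α / β := div_nonneg ((norm_nonneg _).trans (hα 0)) hβ0.le
    have hKf : 0 ≤ K * ‖f‖ := by positivity
    calc _ ≤ K * ‖f‖ := norm_sum_range_two_mul_interleave_le hK0 hKx hKy f q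
      _ ≤ (1 + 2 * (α / β)) * K * ‖f‖ := by nlinarith
  · exact norm_sum_range_two_mul_add_one_interleave_le hK0 hKx hKy hα hβ0 hβ f q

end Interleave

theorem stmt17_general {X Y : Type*} [NormedAddCommGroup X] [NormedSpace ℂ X]
    [NormedAddCommGroup Y] [NormedSpace ℂ Y]
    (x : ℕ → X) (y : ℕ → Y)
    (xs : ℕ → X →L[ℂ] ℂ) (ys : ℕ → Y →L[ℂ] ℂ)
    (hxbi : ∀ n k, xs n (x k) = if n = k then 1 else 0)
    (hybi : ∀ n k, ys n (y k) = if n = k then 1 else 0)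
    (hxd : Dense (Submodule.span ℂ (Set.range x) : Set X))
    (hyd : Dense (Submodule.span ℂ (Set.range y) : Set Y))
    (K₁ K₂ : ℝ) (hK₁1 : 1 ≤ K₁)
    (hK₁ : ∀ (f : X) (m : ℕ), ‖∑ k ∈ Finset.range m, xs k f • x k‖ ≤ K₁ * ‖f‖)
    (hK₂ : ∀ (f : Y) (m : ℕ), ‖∑ k ∈ Finset.range m, ys k f • y k‖ ≤ K₂ * ‖f‖)
    (α β : ℝ) (hα : ∀ n, ‖x n‖ ≤ α) (hβ0 : 0 < β) (hβ : ∀ n, β ≤ ‖y n‖) :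
    ∃ zs : ℕ → (X × Y) →L[ℂ] ℂ,
      (∀ n k, zs n (interleave x y k) = if n = k then 1 else 0) ∧
      Dense (Submodule.span ℂ (Set.range (interleave x y)) : Set (X × Y)) ∧
      ∀ (f : X × Y) (m : ℕ),
        ‖∑ k ∈ Finset.range m, zs k f • interleave x y k‖ ≤
          (1 + 2 * max 1 (α / β)) * max K₁ K₂ * ‖f‖ := by
  have hK0 : 0 ≤ max K₁ K₂ := (zero_le_one.trans hK₁1).trans (le_max_left K₁ K₂)
  have hKx : ∀ (f : X) (m : ℕ), ‖∑ k ∈ range m, xs k f • x k‖ ≤ max K₁ K₂ * ‖f‖ :=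
    fun f m => (hK₁ f m).trans (by gcongr; exact le_max_left K₁ K₂)
  have hKy : ∀ (f : Y) (m : ℕ), ‖∑ k ∈ range m, ys k f • y k‖ ≤ max K₁ K₂ * ‖f‖ :=
    fun f m => (hK₂ f m).trans (by gcongr; exact le_max_right K₁ K₂)
  refine ⟨interleaveCoord xs ys, interleaveCoord_interleave hxbi hybi,
    dense_span_interleave hxd hyd, fun f m => ?_⟩
  calc _ ≤ (1 + 2 * (α / β)) * max K₁ K₂ * ‖f‖ :=
        norm_sum_range_interleave_le hK0 hKx hKy hα hβ0 hβ f m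
    _ ≤ (1 + 2 * max 1 (α / β)) * max K₁ K₂ * ‖f‖ := by gcongr; exact le_max_right 1 (α / β)

theorem stmt17 {X Y : Type*} [NormedAddCommGroup X] [NormedSpace ℂ X]
    [NormedAddCommGroup Y] [NormedSpace ℂ Y]
    (x : ℕ → X) (y : ℕ → Y)
    (xs : ℕ → X →L[ℂ] ℂ) (ys : ℕ → Y →L[ℂ] ℂ)
    (hxbi : ∀ n k, xs n (x k) = if n = k then 1 else 0)
    (hybi : ∀ n k, ys n (y k) = if n = k then 1 else 0)
    (hxd : Dense (Submodule.span ℂ (Set.range x) : Set X))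
    (hyd : Dense (Submodule.span ℂ (Set.range y) : Set Y))
    (K₁ K₂ : ℝ) (hK₁1 : 1 ≤ K₁) (hK₂1 : 1 ≤ K₂)
    (hK₁ : ∀ (f : X) (m : ℕ), ‖∑ k ∈ Finset.range m, xs k f • x k‖ ≤ K₁ * ‖f‖)
    (hK₂ : ∀ (f : Y) (m : ℕ), ‖∑ k ∈ Finset.range m, ys k f • y k‖ ≤ K₂ * ‖f‖)
    (α β : ℝ) (hα : ∀ n, ‖x n‖ ≤ α) (hβ0 : 0 < β) (hβ : ∀ n, β ≤ ‖y n‖) :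
    ∃ zs : ℕ → (X × Y) →L[ℂ] ℂ,
      (∀ n k, zs n (interleave x y k) = if n = k then 1 else 0) ∧
      Dense (Submodule.span ℂ (Set.range (interleave x y)) : Set (X × Y)) ∧
      ∀ (f : X × Y) (m : ℕ),
        ‖∑ k ∈ Finset.range m, zs k f • interleave x y k‖ ≤
          (1 + 2 * max 1 (α / β)) * max K₁ K₂ * ‖f‖ :=
  stmt17_general x y xs ys hxbi hybi hxd hyd K₁ K₂ hK₁1 hK₁ hK₂ α β hα hβ0 hβ
end

section
/- Let $\mathcal{X}$ and $\mathcal{Y}$ be lattice unconditional bases of Banach spaces $\mathbb{X}$ and $\mathbb{Y}$ with lattice unconditionality constants $C_1$ and $C_2$ respectively. Form $\mathcal{Z} = \mathcal{X}\ltimes\mathcal{Y}$, the basis of $\mathbb{X}\oplus_\infty\mathbb{Y}$ given by $\boldsymbol{z}_{2k-1}=(\boldsymbol{x}_k,0)$, $\boldsymbol{z}_{2k}=(-\boldsymbol{x}_k,\boldsymbol{y}_k)$. Then $\mathcal{Z}$ is flattening quasi-greedy: if $f, g \in \mathbb{X}\oplus\mathbb{Y}$ and $A$ is a finite set with $\boldsymbol{z}_n^*(f)=\boldsymbol{z}_n^*(g)$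 and $|\boldsymbol{z}_n^*(f)|\le 1$ for $n\notin A$, while $|\boldsymbol{z}_n^*(f)|=1$ and $\boldsymbol{z}_n^*(g)/\boldsymbol{z}_n^*(f)\ge 1$ for $n\in A$, then $\|f\| \le \max\{C_1, C_2\}\|g\|$. -/
/-- The biorthogonal functionals of the interleaved basis:
`z*_{2k} = x*_k ∘ P_X + y*_k ∘ P_Y`, `z*_{2k+1} = y*_k ∘ P_Y`. -/
noncomputable def interleaveDual {X Y : Type*} [NormedAddCommGroup X] [NormedSpace ℂ X]
    [NormedAddCommGroup Y] [NormedSpace ℂ Y]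
    (xs : ℕ → X →L[ℂ] ℂ) (ys : ℕ → Y →L[ℂ] ℂ) : ℕ → (X × Y) →L[ℂ] ℂ :=
  fun n =>
    if n % 2 = 0 then
      (xs (n / 2)).comp (ContinuousLinearMap.fst ℂ X Y) +
        (ys (n / 2)).comp (ContinuousLinearMap.snd ℂ X Y)
    else (ys (n / 2)).comp (ContinuousLinearMap.snd ℂ X Y)

/-! The two ingredients are the scalar inequality `|z₁ - z₂| ≤ |t₁z₁ - t₂z₂|` for `|z₁| ≤ |z₂|`
and `1 ≤ t₁ ≤ t₂`, and the dual identities `x*_k ∘ P_X = z*_{2k} - z*_{2k+1}`,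
`y*_k ∘ P_Y = z*_{2k+1}`. Together they show that every coordinate of `P_X f` (resp. `P_Y f`) is
dominated in modulus by the same coordinate of `P_X g` (resp. `P_Y g`), so lattice
unconditionality of `𝒳` and `𝒴` bounds the two components of `f` separately. -/

section Flattening

variable {E : Type*} [NormedAddCommGroup E]

/-- The relation between `z*_n(f)` and `z*_n(g)` in the flattening condition, for every `n`. -/
def IsFlattening [NormedSpace ℝ E] (z w : E) : Prop :=
  ‖z‖ ≤ 1 ∧ ∃ t : ℝ, 1 ≤ t ∧ w = t • z ∧ (t = 1 ∨ ‖z‖ = 1)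

theorem IsFlattening.norm_le [NormedSpace ℝ E] {z w : E} (h : IsFlattening z w) :
    ‖z‖ ≤ ‖w‖ := by
  obtain ⟨-, t, ht, rfl, -⟩ := h
  rw [norm_smul, Real.norm_of_nonneg (zero_le_one.trans ht)]
  exact le_mul_of_one_le_left (norm_nonneg z) ht

open scoped InnerProductSpace

variable [InnerProductSpace ℝ E]

theorem norm_sub_le_norm_smul_sub_smul {z₁ z₂ : E} {t₁ t₂ : ℝ} (hz : ‖z₁‖ ≤ ‖z₂‖)
    (ht₁ : 1 ≤ t₁) (ht : t₁ ≤ t₂) : ‖z₁ - z₂‖ ≤ ‖t₁ • z₁ - t₂ • z₂‖ := by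
  have hinner : ⟪z₁, z₂⟫_ℝ ≤ ‖z₂‖ ^ 2 :=
    (real_inner_le_norm z₁ z₂).trans (by nlinarith [norm_nonneg z₁])
  have hsq : ‖t₁ • z₁ - t₂ • z₂‖ ^ 2 - ‖z₁ - z₂‖ ^ 2 =
      (t₁ ^ 2 - 1) * ‖z₁ - z₂‖ ^ 2 + 2 * t₁ * (t₂ - t₁) * (‖z₂‖ ^ 2 - ⟪z₁, z₂⟫_ℝ) +
        (t₂ - t₁) ^ 2 * ‖z₂‖ ^ 2 := by
    simp only [norm_sub_sq_real, norm_smul, real_inner_smul_left, real_inner_smul_right,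
      Real.norm_eq_abs, abs_of_nonneg (by linarith : (0 : ℝ) ≤ t₁),
      abs_of_nonneg (by linarith : (0 : ℝ) ≤ t₂)]
    ring
  rw [← pow_le_pow_iff_left₀ (norm_nonneg _) (norm_nonneg _) two_ne_zero]
  have ht₁sq : 0 ≤ t₁ ^ 2 - 1 := by nlinarith
  nlinarith [mul_nonneg ht₁sq (sq_nonneg ‖z₁ - z₂‖),
    mul_nonneg (mul_nonneg (by linarith : (0 : ℝ) ≤ 2 * t₁) (sub_nonneg.mpr ht))
      (sub_nonneg.mpr hinner), mul_nonneg (sq_nonneg (t₂ - t₁)) (sq_nonneg ‖z₂‖)]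

theorem IsFlattening.norm_sub_le {z w z' w' : E} (h : IsFlattening z w)
    (h' : IsFlattening z' w') : ‖z - z'‖ ≤ ‖w - w'‖ := by
  obtain ⟨hz, s, hs, rfl, hs₁⟩ := h
  obtain ⟨hz', s', hs', rfl, hs'₁⟩ := h'
  wlog hss : s ≤ s' generalizing z z' s s'
  · rw [norm_sub_rev, norm_sub_rev (s • z)]
    exact this hz' s' hs' hs'₁ hz s hs hs₁ (le_of_not_ge hss)
  -- if `s' > 1` then `z'` is on the unit sphere, hence the longer of the two vectors
  rcases hs'₁ with rfl | hz'₁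
  · obtain rfl : s = 1 := le_antisymm hss hs
    simp only [one_smul, le_refl]
  · exact norm_sub_le_norm_smul_sub_smul (hz.trans hz'₁.ge) hs hss

end Flattening

theorem max_mul_le_max_mul_max {C₁ C₂ a b : ℝ} (ha : a ≤ C₁ * a) (hb : b ≤ C₂ * b)
    (ha₀ : 0 ≤ a) (hb₀ : 0 ≤ b) : max (C₁ * a) (C₂ * b) ≤ max C₁ C₂ * max a b := by
  wlog hab : a ≤ b generalizing C₁ C₂ a b
  · rw [max_comm, max_comm C₁, max_comm a]
    exact this hb ha hb₀ ha₀ (le_of_not_ge hab)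
  rw [max_eq_right hab]
  rcases hb₀.eq_or_lt with rfl | hb_pos
  · obtain rfl : a = 0 := le_antisymm hab ha₀
    simp
  have hC₂ : 1 ≤ C₂ := le_of_mul_le_mul_right (by linarith) hb_pos
  have hM : 0 ≤ max C₁ C₂ := zero_le_one.trans (hC₂.trans (le_max_right _ _))
  exact max_le (by nlinarith [le_max_left C₁ C₂, mul_le_mul_of_nonneg_left hab hM])
    (mul_le_mul_of_nonneg_right (le_max_right _ _) hb₀)

section InterleaveDual

variable {X Y : Type*} [NormedAddCommGroup X] [NormedSpace ℂ X]
  [NormedAddCommGroup Y] [NormedSpace ℂ Y] (xs : ℕ → X →L[ℂ] ℂ) (ys : ℕ → Y →L[ℂ] ℂ)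

theorem interleaveDual_two_mul (k : ℕ) (p : X × Y) :
    interleaveDual xs ys (2 * k) p = xs k p.1 + ys k p.2 := by
  simp [interleaveDual]

theorem interleaveDual_two_mul_add_one (k : ℕ) (p : X × Y) :
    interleaveDual xs ys (2 * k + 1) p = ys k p.2 := by
  simp [interleaveDual, Nat.add_mod, Nat.add_div]

theorem interleaveDual_two_mul_sub_two_mul_add_one (k : ℕ) (p : X × Y) :
    interleaveDual xs ys (2 * k) p - interleaveDual xs ys (2 * k + 1) p = xs k p.1 := by
  rw [interleaveDual_two_mul, interleaveDual_two_mul_add_one, add_sub_cancel_right]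

end InterleaveDual

theorem stmt18_general {X Y : Type*} [NormedAddCommGroup X] [NormedSpace ℂ X]
    [NormedAddCommGroup Y] [NormedSpace ℂ Y]
    (xs : ℕ → X →L[ℂ] ℂ) (ys : ℕ → Y →L[ℂ] ℂ)
    (C₁ C₂ : ℝ)
    (hC₁ : ∀ f g : X, (∀ n, ‖xs n f‖ ≤ ‖xs n g‖) → ‖f‖ ≤ C₁ * ‖g‖)
    (hC₂ : ∀ f g : Y, (∀ n, ‖ys n f‖ ≤ ‖ys n g‖) → ‖f‖ ≤ C₂ * ‖g‖)
    (f g : X × Y) (A : Finset ℕ)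
    (hout : ∀ n ∉ A, interleaveDual xs ys n f = interleaveDual xs ys n g ∧
      ‖interleaveDual xs ys n f‖ ≤ 1)
    (hin : ∀ n ∈ A, ‖interleaveDual xs ys n f‖ = 1 ∧
      ∃ t : ℝ, 1 ≤ t ∧ interleaveDual xs ys n g = (t : ℂ) * interleaveDual xs ys n f) :
    ‖f‖ ≤ max C₁ C₂ * ‖g‖ := by
  set D := interleaveDual xs ys
  have hflat : ∀ n, IsFlattening (D n f) (D n g) := by
    intro n
    by_cases hn : n ∈ A
    · obtain ⟨hnorm, t, ht, hg⟩ := hin n hn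
      exact ⟨hnorm.le, t, ht, by rw [hg, Complex.real_smul], Or.inr hnorm⟩
    · obtain ⟨hfg, hnorm⟩ := hout n hn
      exact ⟨hnorm, 1, le_rfl, by rw [hfg, one_smul], Or.inl rfl⟩
  have hX : ‖f.1‖ ≤ C₁ * ‖g.1‖ := hC₁ _ _ fun k => by
    simpa only [D, interleaveDual_two_mul_sub_two_mul_add_one] using
      (hflat (2 * k)).norm_sub_le (hflat (2 * k + 1))
  have hY : ‖f.2‖ ≤ C₂ * ‖g.2‖ := hC₂ _ _ fun k => by
    simpa only [D, interleaveDual_two_mul_add_one] using (hflat (2 * k + 1)).norm_le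
  calc ‖f‖ = max ‖f.1‖ ‖f.2‖ := rfl
    _ ≤ max (C₁ * ‖g.1‖) (C₂ * ‖g.2‖) := max_le_max hX hY
    _ ≤ max C₁ C₂ * ‖g‖ :=
      max_mul_le_max_mul_max (hC₁ _ _ fun _ => le_rfl) (hC₂ _ _ fun _ => le_rfl)
        (norm_nonneg _) (norm_nonneg _)

theorem stmt18 {X Y : Type*} [NormedAddCommGroup X] [NormedSpace ℂ X]
    [NormedAddCommGroup Y] [NormedSpace ℂ Y]
    (x : ℕ → X) (y : ℕ → Y)
    (xs : ℕ → X →L[ℂ] ℂ) (ys : ℕ → Y →L[ℂ] ℂ)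
    (hxbi : ∀ n k, xs n (x k) = if n = k then 1 else 0)
    (hybi : ∀ n k, ys n (y k) = if n = k then 1 else 0)
    (C₁ C₂ : ℝ)
    (hC₁ : ∀ f g : X, (∀ n, ‖xs n f‖ ≤ ‖xs n g‖) → ‖f‖ ≤ C₁ * ‖g‖)
    (hC₂ : ∀ f g : Y, (∀ n, ‖ys n f‖ ≤ ‖ys n g‖) → ‖f‖ ≤ C₂ * ‖g‖)
    (f g : X × Y) (A : Finset ℕ)
    (hout : ∀ n ∉ A, interleaveDual xs ys n f = interleaveDual xs ys n g ∧
      ‖interleaveDual xs ys n f‖ ≤ 1)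
    (hin : ∀ n ∈ A, ‖interleaveDual xs ys n f‖ = 1 ∧
      ∃ t : ℝ, 1 ≤ t ∧ interleaveDual xs ys n g = (t : ℂ) * interleaveDual xs ys n f) :
    ‖f‖ ≤ max C₁ C₂ * ‖g‖ :=
  stmt18_general xs ys C₁ C₂ hC₁ hC₂ f g A hout hin
end
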